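/- arXiv:1406.3781 — 9 statements merged into one kernel-verified Lean document; each statement's English description precedes it below -/
import Mathlib

section
/- Let η > 0, a > 0 and n a positive integer, and define g : [-1,1] → ℝ² by g(x) = (x, exp(η x)). Then the point (-a/n, 1) lies in the convex hull of the image g([-1,1]) if and only if a/n ≤ (exp(η) + exp(-η) - 2)/(exp(η) - exp(-η)) = (cosh(η) - 1)/sinh(η). -/
/-!
For `t ≥ 0` the point `(-t, 1)` never lies below the graph of `x ↦ exp (η x)`, so it is in the
convex hull of the graph over `[-1, 1]` exactly when it lies below the chord through the endpoints,
`y = cosh η + x sinh η`; the chord bounds the hull from above by convexity of `exp`, and every point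
between graph and chord lies on a vertical segment from the graph to the chord. Membership therefore
reduces to `1 ≤ cosh η - t sinh η`.
-/

open Real Set

section GraphConvexHull

variable (f : ℝ → ℝ)

theorem convexHull_graph_subset_of_le_affine {s : Set ℝ} {c m : ℝ}
    (h : ∀ x ∈ s, f x ≤ c + m * x) :
    convexHull ℝ ((fun x => (x, f x)) '' s) ⊆ {p : ℝ × ℝ | p.2 ≤ c + m * p.1} := by
  refine convexHull_min ?_ ?_
  · rintro _ ⟨x, hx, rfl⟩
    exact h x hx
  · have hlin : IsLinearMap ℝ fun p : ℝ × ℝ => p.2 - m * p.1 :=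
      ⟨fun p q => by simp only [Prod.fst_add, Prod.snd_add]; ring,
        fun r p => by simp only [Prod.smul_fst, Prod.smul_snd, smul_eq_mul]; ring⟩
    simpa only [sub_le_iff_le_add] using convex_halfSpace_le hlin c

theorem mk_mem_convexHull_graph_of_le_of_le_chord {a b x y : ℝ} (hab : a < b)
    (hx : x ∈ Icc a b) (hfy : f x ≤ y) (hy : y ≤ f a + (f b - f a) / (b - a) * (x - a)) :
    (x, y) ∈ convexHull ℝ ((fun x => (x, f x)) '' Icc a b) := by
  set S := (fun x => (x, f x)) '' Icc a b
  have hba : 0 < b - a := sub_pos.mpr hab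
  have hchord : (x, f a + (f b - f a) / (b - a) * (x - a)) ∈ convexHull ℝ S := by
    refine segment_subset_convexHull (mem_image_of_mem _ (left_mem_Icc.mpr hab.le))
      (mem_image_of_mem _ (right_mem_Icc.mpr hab.le)) ⟨(b - x) / (b - a), (x - a) / (b - a),
        div_nonneg (by linarith [hx.2]) hba.le, div_nonneg (by linarith [hx.1]) hba.le, ?_, ?_⟩
    · field_simp; ring
    · ext <;> simp only [Prod.smul_mk, Prod.mk_add_mk, smul_eq_mul] <;> field_simp <;> ring
  refine (convex_convexHull ℝ S).segment_subset
    (subset_convexHull ℝ S (mem_image_of_mem _ hx)) hchord ?_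
  rw [← Prod.image_mk_segment_right, segment_eq_Icc (hfy.trans hy)]
  exact mem_image_of_mem _ ⟨hfy, hy⟩

end GraphConvexHull

theorem exp_mul_le_cosh_add_sinh_mul (η : ℝ) {x : ℝ} (hx : x ∈ Icc (-1 : ℝ) 1) :
    exp (η * x) ≤ cosh η + sinh η * x := by
  have h := convexOn_exp.2 (mem_univ (-η)) (mem_univ η)
    (by linarith [hx.2] : (0 : ℝ) ≤ (1 - x) / 2) (by linarith [hx.1] : (0 : ℝ) ≤ (1 + x) / 2)
    (by ring)
  simp only [smul_eq_mul] at h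
  calc exp (η * x) = exp ((1 - x) / 2 * -η + (1 + x) / 2 * η) := by ring_nf
    _ ≤ (1 - x) / 2 * exp (-η) + (1 + x) / 2 * exp η := h
    _ = cosh η + sinh η * x := by rw [cosh_eq, sinh_eq]; ring

theorem cosh_sub_one_div_sinh_lt_one {η : ℝ} (hη : 0 < η) : (cosh η - 1) / sinh η < 1 := by
  rw [div_lt_one (sinh_pos_iff.mpr hη)]
  linarith [cosh_sub_sinh η, exp_lt_one_iff.mpr (neg_lt_zero.mpr hη)]

theorem mk_one_mem_convexHull_graph_exp_iff {η t : ℝ} (hη : 0 < η) (ht : 0 ≤ t) :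
    ((-t, 1) : ℝ × ℝ) ∈ convexHull ℝ ((fun x : ℝ => (x, exp (η * x))) '' Icc (-1 : ℝ) 1) ↔
      t ≤ (cosh η - 1) / sinh η := by
  have hs : 0 < sinh η := sinh_pos_iff.mpr hη
  rw [le_div_iff₀ hs]
  constructor
  · intro h
    have hle : 1 ≤ cosh η + sinh η * -t := convexHull_graph_subset_of_le_affine _
      (fun x hx => exp_mul_le_cosh_add_sinh_mul η hx) h
    linarith
  · intro h
    have ht1 : t ≤ 1 := ((le_div_iff₀ hs).mpr h).trans (cosh_sub_one_div_sinh_lt_one hη).le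
    refine mk_mem_convexHull_graph_of_le_of_le_chord _ (by norm_num) ⟨by linarith, by linarith⟩
      (exp_le_one_iff.mpr (by nlinarith)) ?_
    calc (1 : ℝ) ≤ cosh η + sinh η * -t := by linarith
      _ = exp (η * -1) + (exp (η * 1) - exp (η * -1)) / (1 - -1) * (-t - -1) := by
        rw [cosh_eq, sinh_eq]; ring_nf

theorem feasible_moments_general (η a : ℝ) (hη : 0 < η) (ha : 0 < a) (n : ℕ) :
    (((-a / n, 1) : ℝ × ℝ) ∈
        convexHull ℝ ((fun x : ℝ => (x, Real.exp (η * x))) '' Set.Icc (-1 : ℝ) 1)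
      ↔ a / n ≤ (Real.exp η + Real.exp (-η) - 2) / (Real.exp η - Real.exp (-η)))
    ∧ (Real.exp η + Real.exp (-η) - 2) / (Real.exp η - Real.exp (-η))
        = (Real.cosh η - 1) / Real.sinh η := by
  have hquot : (exp η + exp (-η) - 2) / (exp η - exp (-η)) = (cosh η - 1) / sinh η := by
    rw [cosh_eq, sinh_eq, div_sub_one two_ne_zero, div_div_div_cancel_right₀ two_ne_zero]
  rw [hquot, neg_div]
  exact ⟨mk_one_mem_convexHull_graph_exp_iff hη (by positivity), rfl⟩

/-- **Feasible moments.**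
For `η > 0`, `a > 0` and a positive integer `n`, with `g x = (x, exp (η x))`,
the point `(-a/n, 1)` lies in the convex hull of `g '' [-1, 1]` if and only if
`a/n ≤ (exp η + exp (-η) - 2) / (exp η - exp (-η)) = (cosh η - 1) / sinh η`. -/
theorem feasible_moments (η a : ℝ) (hη : 0 < η) (ha : 0 < a) (n : ℕ) (hn : 0 < n) :
    (((-a / n, 1) : ℝ × ℝ) ∈
        convexHull ℝ ((fun x : ℝ => (x, Real.exp (η * x))) '' Set.Icc (-1 : ℝ) 1)
      ↔ a / n ≤ (Real.exp η + Real.exp (-η) - 2) / (Real.exp η - Real.exp (-η)))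
    ∧ (Real.exp η + Real.exp (-η) - 2) / (Real.exp η - Real.exp (-η))
        = (Real.cosh η - 1) / Real.sinh η :=
  feasible_moments_general η a hη ha n
end

section
/- Let η ∈ (0, 1] and let c₂ = 0.32. Then for all x ∈ [-1, 1], the function u_η(x) = 1 + c₂ (exp(η x) - 1) - exp((η/2) x) + η (1/2 - c₂) x is nonnegative. -/
/-!
Substituting `t = η x / 2` turns `u_η(x)` into `g(t) = 1 + c (e^{2t} - 1) - e^t + (1 - 2c) t`
with `c = 0.32`, and `t ≥ -1/2`. Since `g'(t) = (e^t - 1)(2c e^t - (1 - 2c))` and the second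
factor is nonnegative as soon as `e^t ≥ (1 - 2c) / (2c) = 9/16 = (3/4)^2`, which holds for
`t ≥ -1/2` because `e^{-1/4} ≥ 3/4`, the function `g` decreases up to `0` and increases
after it, so `g ≥ g(0) = 0`.
-/

open Real Set

noncomputable def dualCertificate (c t : ℝ) : ℝ :=
  1 + c * (exp (2 * t) - 1) - exp t + (1 - 2 * c) * t

section

variable {c a : ℝ}

theorem dualCertificate_zero (c : ℝ) : dualCertificate c 0 = 0 := by
  simp [dualCertificate]

theorem hasDerivAt_dualCertificate (c t : ℝ) :
    HasDerivAt (dualCertificate c) ((exp t - 1) * (2 * c * exp t - (1 - 2 * c))) t := by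
  have h : HasDerivAt (fun s => 1 + c * (exp (2 * s) - 1) - exp s + (1 - 2 * c) * s)
      (c * (exp (2 * t) * 2) - exp t + (1 - 2 * c)) t := by
    have := (((((hasDerivAt_id t).const_mul 2).exp.sub_const 1).const_mul c).const_add 1).fun_sub
      (hasDerivAt_exp t) |>.fun_add ((hasDerivAt_id t).const_mul (1 - 2 * c))
    simpa using this
  refine h.congr_deriv ?_
  rw [show 2 * t = t + t by ring, exp_add]; ring

theorem continuous_dualCertificate (c : ℝ) : Continuous (dualCertificate c) :=
  continuous_iff_continuousAt.2 fun t => (hasDerivAt_dualCertificate c t).continuousAt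

theorem deriv_factor_nonneg (hc : 1 - 2 * c ≤ 2 * c * exp (-a)) {t : ℝ} (ht : -a ≤ t) :
    0 ≤ 2 * c * exp t - (1 - 2 * c) := by
  have hc₀ : 0 ≤ c := by nlinarith [exp_pos (-a)]
  have : 2 * c * exp (-a) ≤ 2 * c * exp t := by gcongr
  linarith

theorem monotoneOn_dualCertificate_Ici (hc : 1 - 2 * c ≤ 2 * c * exp (-a)) (ha : 0 ≤ a) :
    MonotoneOn (dualCertificate c) (Ici 0) := by
  refine monotoneOn_of_hasDerivWithinAt_nonneg (convex_Ici 0)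
    (continuous_dualCertificate c).continuousOn
    (fun t _ => (hasDerivAt_dualCertificate c t).hasDerivWithinAt) fun t ht => ?_
  rw [interior_Ici] at ht
  exact mul_nonneg (by linarith [add_one_le_exp t, mem_Ioi.1 ht])
    (deriv_factor_nonneg hc (by linarith [mem_Ioi.1 ht]))

theorem antitoneOn_dualCertificate_Icc (hc : 1 - 2 * c ≤ 2 * c * exp (-a)) :
    AntitoneOn (dualCertificate c) (Icc (-a) 0) := by
  refine antitoneOn_of_hasDerivWithinAt_nonpos (convex_Icc (-a) 0)
    (continuous_dualCertificate c).continuousOn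
    (fun t _ => (hasDerivAt_dualCertificate c t).hasDerivWithinAt) fun t ht => ?_
  rw [interior_Icc] at ht
  exact mul_nonpos_of_nonpos_of_nonneg (by linarith [exp_le_one_iff.2 ht.2.le])
    (deriv_factor_nonneg hc ht.1.le)

theorem dualCertificate_nonneg (hc : 1 - 2 * c ≤ 2 * c * exp (-a)) (ha : 0 ≤ a) {t : ℝ}
    (ht : -a ≤ t) : 0 ≤ dualCertificate c t := by
  rw [← dualCertificate_zero c]
  rcases le_total 0 t with ht₀ | ht₀
  · exact monotoneOn_dualCertificate_Ici hc ha self_mem_Ici ht₀ ht₀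
  · exact antitoneOn_dualCertificate_Icc hc ⟨ht, ht₀⟩ ⟨by linarith, le_rfl⟩ ht₀

end

theorem nine_sixteenths_le_exp_neg_half : (9 / 16 : ℝ) ≤ exp (-(1 / 2)) := by
  have h := add_one_le_exp (-(1 / 4) : ℝ)
  calc (9 / 16 : ℝ) = (3 / 4) ^ 2 := by norm_num
    _ ≤ exp (-(1 / 4)) ^ 2 := by gcongr; linarith
    _ = exp (-(1 / 2)) := by rw [← exp_nat_mul]; norm_num

/-- **Dual feasibility certificate, small `η` regime.**
For `η ∈ (0, 1]` and `c₂ = 0.32`, the function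
`u_η(x) = 1 + c₂ (exp(η x) - 1) - exp((η/2) x) + η (1/2 - c₂) x`
is nonnegative on `[-1, 1]`. -/
theorem u_eta_nonneg_small_eta (η : ℝ) (hη : 0 < η) (hη1 : η ≤ 1)
    (x : ℝ) (hx : x ∈ Set.Icc (-1 : ℝ) 1) :
    0 ≤ 1 + (0.32 : ℝ) * (Real.exp (η * x) - 1) - Real.exp (η / 2 * x)
        + η * (1 / 2 - 0.32) * x := by
  have hsubst : 1 + (0.32 : ℝ) * (Real.exp (η * x) - 1) - Real.exp (η / 2 * x)
      + η * (1 / 2 - 0.32) * x = dualCertificate 0.32 (η / 2 * x) := by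
    rw [dualCertificate, show 2 * (η / 2 * x) = η * x by ring]; ring
  have ht : -(1 / 2) ≤ η / 2 * x := by
    nlinarith [mul_nonneg hη.le (neg_le_iff_add_nonneg.1 hx.1)]
  rw [hsubst]
  exact dualCertificate_nonneg (by linarith [nine_sixteenths_le_exp_neg_half]) (by norm_num) ht
end

section
/- Let η > 1, let α = (1/2)(√e - 1)², and let c₂ = 1/2 - α/η. Then for all x ∈ [-1, 1], the function u_η(x) = 1 + c₂ (exp(η x) - 1) - exp((η/2) x) + η (1/2 - c₂) x is nonnegative. -/
open Real Set

/-! With `s = η x / 2` and `β = α / η`, `u_η(x) = ½ (eˢ - 1)² - β (e²ˢ - 2s - 1)`. Its derivative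
in `s` is `(eˢ - 1) ((1 - 2β) eˢ - 2β)`, so for `0 < β ≤ 1/4` it increases, then decreases until it
vanishes at `s = 0`, and increases afterwards. Hence it is nonnegative for all `s ≥ -η/2` as soon as
it is at `s = -η/2`, that is at `x = -1`. There, nonnegativity reads
`α (e²ˢ - 2s - 1) ≤ -s (eˢ - 1)²` for `s = -η/2 ≤ -1/2`: `α` is chosen to make this an equality at
`s = -1/2`, and the difference of the two sides is antitone for `s ≤ -1/2`. -/

theorem monotoneOn_of_forall_hasDerivAt_nonneg {f f' : ℝ → ℝ} {D : Set ℝ} (hD : Convex ℝ D)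
    (hf : ∀ x, HasDerivAt f (f' x) x) (hf' : ∀ x ∈ interior D, 0 ≤ f' x) : MonotoneOn f D :=
  monotoneOn_of_hasDerivWithinAt_nonneg hD (fun x _ ↦ (hf x).continuousAt.continuousWithinAt)
    (fun x _ ↦ (hf x).hasDerivWithinAt) hf'

theorem antitoneOn_of_forall_hasDerivAt_nonpos {f f' : ℝ → ℝ} {D : Set ℝ} (hD : Convex ℝ D)
    (hf : ∀ x, HasDerivAt f (f' x) x) (hf' : ∀ x ∈ interior D, f' x ≤ 0) : AntitoneOn f D :=
  antitoneOn_of_hasDerivWithinAt_nonpos hD (fun x _ ↦ (hf x).continuousAt.continuousWithinAt)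
    (fun x _ ↦ (hf x).hasDerivWithinAt) hf'

theorem min_le_of_hasDerivAt_nonneg_of_nonpos {f f' : ℝ → ℝ} {a b m x : ℝ}
    (hf : ∀ t, HasDerivAt f (f' t) t) (hinc : ∀ t < m, 0 ≤ f' t)
    (hdec : ∀ t, m < t → t < b → f' t ≤ 0) (hx : x ∈ Icc a b) :
    min (f a) (f b) ≤ f x := by
  rcases le_total x m with hxm | hmx
  · have hmono : MonotoneOn f (Iic m) := monotoneOn_of_forall_hasDerivAt_nonneg (convex_Iic m) hf
      (by rw [interior_Iic]; exact hinc)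
    exact min_le_left _ _ |>.trans (hmono (hx.1.trans hxm) hxm hx.1)
  · have hanti : AntitoneOn f (Icc m b) := antitoneOn_of_forall_hasDerivAt_nonpos (convex_Icc m b)
      hf (by simpa only [interior_Icc] using fun t ht ↦ hdec t ht.1 ht.2)
    exact min_le_right _ _ |>.trans (hanti ⟨hmx, hx.2⟩ ⟨hmx.trans hx.2, le_rfl⟩ hx.2)

theorem exp_two_mul (s : ℝ) : exp (2 * s) = exp s ^ 2 := by
  rw [two_mul, exp_add, sq]

theorem hasDerivAt_exp_two_mul_sub (s : ℝ) :
    HasDerivAt (fun t ↦ exp (2 * t) - 2 * t - 1) (2 * (exp s ^ 2 - 1)) s := by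
  have hlin : HasDerivAt (fun t : ℝ ↦ 2 * t) 2 s := by simpa using (hasDerivAt_id s).const_mul 2
  refine (hlin.exp.sub hlin).sub_const 1 |>.congr_deriv ?_
  rw [exp_two_mul]
  ring

/-- `u_η(x)` in the variable `s = η x / 2`, with `β = α / η`. -/
noncomputable def uReduced (β s : ℝ) : ℝ :=
  1 / 2 * (exp s - 1) ^ 2 - β * (exp (2 * s) - 2 * s - 1)

theorem hasDerivAt_uReduced (β s : ℝ) :
    HasDerivAt (uReduced β) ((exp s - 1) * ((1 - 2 * β) * exp s - 2 * β)) s := by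
  refine (((hasDerivAt_exp s).sub_const 1).pow 2).const_mul (1 / 2) |>.sub
    ((hasDerivAt_exp_two_mul_sub s).const_mul β) |>.congr_deriv ?_
  push_cast
  ring

theorem uReduced_zero (β : ℝ) : uReduced β 0 = 0 := by
  simp [uReduced]

theorem uReduced_nonneg_of_le {β a s : ℝ} (hβ₀ : 0 < β) (hβ : β ≤ 1 / 4)
    (ha : 0 ≤ uReduced β a) (has : a ≤ s) : 0 ≤ uReduced β s := by
  rcases le_total s 0 with hs | hs
  · have hc : 0 < 2 * β / (1 - 2 * β) := by apply div_pos <;> linarith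
    refine le_trans ?_ (min_le_of_hasDerivAt_nonneg_of_nonpos (hasDerivAt_uReduced β)
      (m := log (2 * β / (1 - 2 * β))) ?_ ?_ ⟨has, hs⟩)
    · simpa only [uReduced_zero] using le_min ha le_rfl
    · intro t ht
      have hexp : exp t ≤ 1 := exp_le_one_iff.2 <| ht.le.trans <| log_nonpos hc.le <| by
        rw [div_le_one (by linarith)]; linarith
      have : (1 - 2 * β) * exp t ≤ 2 * β := by
        rw [← le_div_iff₀' (by linarith), ← exp_log hc]
        exact exp_le_exp.2 ht.le
      exact mul_nonneg_of_nonpos_of_nonpos (by linarith) (by linarith)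
    · intro t hmt ht
      have : 2 * β ≤ (1 - 2 * β) * exp t := by
        rw [← div_le_iff₀' (by linarith), ← exp_log hc]
        exact exp_le_exp.2 hmt.le
      exact mul_nonpos_of_nonpos_of_nonneg (by linarith [exp_le_one_iff.2 ht.le]) (by linarith)
  · have hmono : MonotoneOn (uReduced β) (Ici 0) :=
      monotoneOn_of_forall_hasDerivAt_nonneg (convex_Ici 0) (hasDerivAt_uReduced β) fun t ht ↦ by
        rw [interior_Ici] at ht
        have h1 : 1 ≤ exp t := one_le_exp ht.le
        exact mul_nonneg (by linarith) (by nlinarith)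
    simpa only [uReduced_zero] using hmono self_mem_Ici hs hs

noncomputable def α : ℝ := 1 / 2 * (√(exp 1) - 1) ^ 2

theorem sqrt_exp_one : √(exp 1) = exp (1 / 2) := by
  rw [← exp_half, one_div]

theorem one_lt_sqrt_exp_one : 1 < √(exp 1) := by
  rw [sqrt_exp_one]; exact one_lt_exp_iff.2 (by norm_num)

theorem α_pos : 0 < α := by
  have := one_lt_sqrt_exp_one
  unfold α; nlinarith

theorem α_le_quarter : α ≤ 1 / 4 := by
  have hsq : √(exp 1) ^ 2 = exp 1 := sq_sqrt (exp_pos 1).le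
  have hlt : √(exp 1) < 1.65 := by nlinarith [exp_one_lt_d9, sqrt_nonneg (exp 1)]
  have := one_lt_sqrt_exp_one
  unfold α; nlinarith

theorem α_mul_exp_neg_one : α * exp (-1) = 1 / 2 * (exp (-(1 / 2)) - 1) ^ 2 := by
  have h : exp (1 / 2) * exp (-(1 / 2)) = 1 := by rw [← exp_add]; norm_num
  have h' : exp (-1) = exp (-(1 / 2)) ^ 2 := by rw [← exp_two_mul]; norm_num
  rw [α, sqrt_exp_one, h']
  linear_combination 1 / 2 * (exp (1 / 2) * exp (-(1 / 2)) - 2 * exp (-(1 / 2)) + 1) * h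

theorem α_mul_le_of_le_neg_half {s : ℝ} (hs : s ≤ -(1 / 2)) :
    α * (exp (2 * s) - 2 * s - 1) ≤ -s * (exp s - 1) ^ 2 := by
  set g : ℝ → ℝ := fun t ↦ -t * (exp t - 1) ^ 2 - α * (exp (2 * t) - 2 * t - 1) with hg
  have hderiv (t : ℝ) : HasDerivAt g
      ((exp t - 1) * ((1 - exp t) - 2 * t * exp t - 2 * α * (1 + exp t))) t := by
    refine ((hasDerivAt_id t).neg.mul (((hasDerivAt_exp t).sub_const 1).pow 2)).sub
      ((hasDerivAt_exp_two_mul_sub t).const_mul α) |>.congr_deriv ?_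
    simp only [Pi.pow_apply, Pi.neg_apply, id]
    push_cast
    ring
  have hanti : AntitoneOn g (Iic (-(1 / 2))) :=
    antitoneOn_of_forall_hasDerivAt_nonpos (convex_Iic _) hderiv fun t ht ↦ by
      rw [interior_Iic, mem_Iio] at ht
      have hexp : exp t ≤ 1 := exp_le_one_iff.2 (by linarith)
      have := α_le_quarter
      exact mul_nonpos_of_nonpos_of_nonneg (by linarith) (by nlinarith [exp_pos t])
  have hend : g (-(1 / 2)) = 0 := by
    simp only [hg, show (2 : ℝ) * -(1 / 2) = -1 by norm_num]
    linear_combination -α_mul_exp_neg_one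
  have := hanti hs (mem_Iic.2 le_rfl) hs
  rw [hend] at this
  simp only [hg] at this
  linarith

theorem uReduced_neg_half_nonneg {η : ℝ} (hη : 1 ≤ η) : 0 ≤ uReduced (α / η) (-(η / 2)) := by
  have h := α_mul_le_of_le_neg_half (s := -(η / 2)) (by linarith)
  rw [uReduced, sub_nonneg, div_mul_eq_mul_div, div_le_iff₀ (by linarith)]
  linarith

/-- **Dual feasibility certificate, large `η` regime.**
For `η > 1`, `α = (1/2)(√e - 1)²` and `c₂ = 1/2 - α/η`, the function
`u_η(x) = 1 + c₂ (exp(η x) - 1) - exp((η/2) x) + η (1/2 - c₂) x`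
is nonnegative on `[-1, 1]`. -/
theorem u_eta_nonneg_large_eta (η : ℝ) (hη : 1 < η)
    (x : ℝ) (hx : x ∈ Set.Icc (-1 : ℝ) 1) :
    0 ≤ 1 + (1 / 2 - (1 / 2 * (Real.sqrt (Real.exp 1) - 1) ^ 2) / η)
          * (Real.exp (η * x) - 1)
        - Real.exp (η / 2 * x)
        + η * (1 / 2 - (1 / 2 - (1 / 2 * (Real.sqrt (Real.exp 1) - 1) ^ 2) / η)) * x := by
  have hη₀ : 0 < η := by linarith
  have hs : -(η / 2) ≤ η / 2 * x := by nlinarith [hx.1]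
  have hβ : α / η ≤ 1 / 4 := (div_le_self α_pos.le hη.le).trans α_le_quarter
  have h := uReduced_nonneg_of_le (div_pos α_pos hη₀) hβ (uReduced_neg_half_nonneg hη.le) hs
  rw [uReduced, exp_two_mul] at h
  rw [← α, show η * x = 2 * (η / 2 * x) by ring, exp_two_mul]
  convert h using 1
  field_simp
  ring
end

section
/- For every η ≥ 1, the inequality ((1 + exp(-η))/2 - exp(-η/2)) + (1/2)(√e - 1)² · ((1 - exp(-η))/η - 1) ≥ 0 holds. -/
open Real

/-!
Put `s = √e`, `a = (s - 1)²` and `t = exp (-η/2) ≤ 1/s`. Multiplied by `2η`, the claim reads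
`η ((1 - t)² - a) + a (1 - t²) ≥ 0`, with equality at `η = 1`. This is clear when `(1 - t)² ≥ a`.
Otherwise the coefficient of `η` is negative and the tangent line of `exp` at `-1/2` gives
`η t ≤ 2/s - t`; after this substitution `s² t` times the expression is at least `(1 - s t)`
times a quadratic in `t` with negative discriminant.
-/

lemma mul_exp_neg_half_le (x : ℝ) : x * exp (-x / 2) ≤ 2 * exp (-1 / 2) - exp (-x / 2) := by
  have htangent : (x - 1) / 2 + 1 ≤ exp ((x - 1) / 2) := add_one_le_exp _
  have hprod : exp ((x - 1) / 2) * exp (-x / 2) = exp (-1 / 2) := by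
    rw [← exp_add]; ring_nf
  nlinarith [exp_pos (-x / 2)]

namespace AlphaChoice

variable {s : ℝ}

lemma discriminant_neg (hs₁ : 1.64 ≤ s) (hs₂ : s ≤ 1.65) :
    ((s - 1) ^ 2 - 1 - 2 * s) ^ 2 < 8 * s ^ 2 * (1 - ((s - 1) ^ 2) ^ 2) := by
  nlinarith [mul_nonneg (sub_nonneg.2 hs₁) (sub_nonneg.2 hs₂)]

lemma quadratic_pos (hs₁ : 1.64 ≤ s) (hs₂ : s ≤ 1.65) (t : ℝ) :
    0 < s * (1 + (s - 1) ^ 2) * t ^ 2 + ((s - 1) ^ 2 - 1 - 2 * s) * t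
      + 2 * s * (1 - (s - 1) ^ 2) := by
  set a := (s - 1) ^ 2
  have hA : 0 < s * (1 + a) := by positivity
  have hsquare :
      4 * (s * (1 + a)) * (s * (1 + a) * t ^ 2 + (a - 1 - 2 * s) * t + 2 * s * (1 - a))
      = (2 * (s * (1 + a)) * t + (a - 1 - 2 * s)) ^ 2
        + (8 * s ^ 2 * (1 - a ^ 2) - (a - 1 - 2 * s) ^ 2) := by ring
  have hpos : 0 < 4 * (s * (1 + a)) *
      (s * (1 + a) * t ^ 2 + (a - 1 - 2 * s) * t + 2 * s * (1 - a)) := by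
    rw [hsquare]
    exact add_pos_of_nonneg_of_pos (sq_nonneg _) (sub_pos.2 (discriminant_neg hs₁ hs₂))
  exact pos_of_mul_pos_right hpos (by positivity)

lemma scaled_nonneg (hs₁ : 1.64 ≤ s) (hs₂ : s ≤ 1.65) {t η : ℝ} (ht₀ : 0 < t) (hts : s * t ≤ 1)
    (hη₀ : 0 ≤ η) (hη : η * t ≤ 2 / s - t) :
    0 ≤ η * ((1 - t) ^ 2 - (s - 1) ^ 2) + (s - 1) ^ 2 * (1 - t ^ 2) := by
  have hs₀ : 0 < s := by linarith
  have ht₁ : t ≤ 1 := by nlinarith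
  rcases le_or_gt ((s - 1) ^ 2) ((1 - t) ^ 2) with hD | hD
  · have : 0 ≤ 1 - t ^ 2 := by nlinarith
    have : 0 ≤ η * ((1 - t) ^ 2 - (s - 1) ^ 2) := mul_nonneg hη₀ (sub_nonneg.2 hD)
    positivity
  · have hsη : s * (η * t) ≤ 2 - s * t := by
      calc s * (η * t) ≤ s * (2 / s - t) := by gcongr
        _ = 2 - s * t := by field_simp
    have hfactor :
        s * (2 - s * t) * ((1 - t) ^ 2 - (s - 1) ^ 2) + s ^ 2 * (s - 1) ^ 2 * t * (1 - t ^ 2)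
        = (1 - s * t) * (s * (1 + (s - 1) ^ 2) * t ^ 2 + ((s - 1) ^ 2 - 1 - 2 * s) * t
          + 2 * s * (1 - (s - 1) ^ 2)) := by ring
    have hQ := quadratic_pos hs₁ hs₂ t
    have : 0 ≤ s ^ 2 * t * (η * ((1 - t) ^ 2 - (s - 1) ^ 2) + (s - 1) ^ 2 * (1 - t ^ 2)) := by
      nlinarith [mul_le_mul_of_nonneg_left hsη hs₀.le]
    exact (mul_nonneg_iff_of_pos_left (by positivity)).1 this

end AlphaChoice

lemma sqrt_exp_one_mem : 1.64 ≤ √(exp 1) ∧ √(exp 1) ≤ 1.65 := by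
  constructor
  · rw [le_sqrt' (by norm_num)]
    linarith [exp_one_gt_d9]
  · rw [sqrt_le_left (by norm_num)]
    linarith [exp_one_lt_d9]

/-- **Analytic inequality certifying the choice `α = (1/2)(√e - 1)²`.**
For every `η ≥ 1`,
`((1 + exp(-η))/2 - exp(-η/2)) + (1/2)(√e - 1)² ((1 - exp(-η))/η - 1) ≥ 0`. -/
theorem alpha_choice_inequality (η : ℝ) (hη : 1 ≤ η) :
    0 ≤ ((1 + Real.exp (-η)) / 2 - Real.exp (-η / 2))
        + (1 / 2) * (Real.sqrt (Real.exp 1) - 1) ^ 2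
          * ((1 - Real.exp (-η)) / η - 1) := by
  obtain ⟨hs₁, hs₂⟩ := sqrt_exp_one_mem
  set s := √(exp 1)
  set t := exp (-η / 2) with ht
  have hexp : exp (-η) = t ^ 2 := by rw [ht, sq, ← exp_add]; ring_nf
  have hs_eq : s = exp (1 / 2) := (exp_half 1).symm
  have hts : s * t ≤ 1 := by
    rw [hs_eq, ht, ← exp_add]
    exact exp_le_one_iff.2 (by linarith)
  have hηt : η * t ≤ 2 / s - t := by
    have h2s : 2 / s = 2 * exp (-1 / 2) := by
      rw [hs_eq, div_eq_mul_inv, ← exp_neg]; norm_num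
    rw [h2s]
    exact mul_exp_neg_half_le η
  have hscaled :
      ((1 + exp (-η)) / 2 - t) + (1 / 2) * (s - 1) ^ 2 * ((1 - exp (-η)) / η - 1)
      = (η * ((1 - t) ^ 2 - (s - 1) ^ 2) + (s - 1) ^ 2 * (1 - t ^ 2)) / (2 * η) := by
    rw [hexp]
    field_simp
    ring
  rw [hscaled]
  exact div_nonneg (AlphaChoice.scaled_nonneg hs₁ hs₂ (exp_pos _) hts (by linarith) hηt)
    (by linarith)
end

section
/- Let V > 0, let Z be a real random variable taking values in [-V, V] almost surely with E[Z] = a/n for a positive integer n and a > 0, and suppose E[exp(-η Z)] = 1 for some η > 0 with a/(V n) < (cosh(V η) - 1)/sinh(V η). Then E[exp(-(η/2) Z)] ≤ 1 - 0.18 η a / ((max(V η, 1)) · n). -/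
/-!
Write `Z = V x` with `x ∈ [-1, 1]`, `L = V η` and `c = 0.18 / max L 1`. It suffices to prove the
pointwise bound `exp (-L x / 2) ≤ (1/2 - c) exp (-L x) + 1/2 + c - c L x`: taking expectations and
using `E[exp (-η Z)] = 1`, `E[Z] = a / n` gives the claim. In the variable `u = exp (-L x / 2)` the
difference of the two sides is `mixGap β u` with `β = 2 c`, a function with derivative
`(u - 1) ((1 - β) u - β) / u`: it increases up to `β / (1 - β) ≤ 1`, decreases to its zero at `u = 1`
and increases again. So it is nonnegative on `[exp (-L / 2), ∞)` once it is at the left endpoint,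
which follows from `L / 2 < sinh (L / 2)` together with `9/16 ≤ exp (-1/2) ≤ 16/25`.
-/

open MeasureTheory Real

open Set

noncomputable def mixGap (β u : ℝ) : ℝ :=
  (1 - β) / 2 * u ^ 2 - u + (1 + β) / 2 + β * log u

lemma hasDerivAt_mixGap (β : ℝ) {u : ℝ} (hu : 0 < u) :
    HasDerivAt (mixGap β) ((u - 1) * ((1 - β) * u - β) / u) u := by
  have hsq : HasDerivAt (· ^ 2) (2 * u) u := by simpa using hasDerivAt_pow 2 u
  have h : HasDerivAt (mixGap β) ((1 - β) / 2 * (2 * u) - 1 + β * u⁻¹) u :=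
    (((hsq.const_mul _).sub (hasDerivAt_id u)).add_const _).add
      ((hasDerivAt_log hu.ne').const_mul β)
  convert h using 1
  field_simp
  ring

lemma mixGap_one (β : ℝ) : mixGap β 1 = 0 := by
  norm_num [mixGap]
  ring

lemma continuousOn_mixGap (β : ℝ) {D : Set ℝ} (hD : D ⊆ Ioi 0) :
    ContinuousOn (mixGap β) D :=
  fun _ hu ↦ (hasDerivAt_mixGap β (hD hu)).continuousAt.continuousWithinAt

section MixGap

variable {β : ℝ}

lemma mixGap_monotoneOn_Ioc (hβ : β ≤ 1 / 2) :
    MonotoneOn (mixGap β) (Ioc 0 (β / (1 - β))) := by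
  have h1β : 0 < 1 - β := by linarith
  refine monotoneOn_of_hasDerivWithinAt_nonneg (convex_Ioc _ _)
    (continuousOn_mixGap β Ioc_subset_Ioi_self)
    (fun u hu ↦ (hasDerivAt_mixGap β (interior_subset hu).1).hasDerivWithinAt) fun u hu ↦ ?_
  rw [interior_Ioc] at hu
  have hu₀ : (1 - β) * u ≤ β := (le_div_iff₀' h1β).1 hu.2.le
  have hu1 : u ≤ 1 := hu.2.le.trans ((div_le_one h1β).2 (by linarith))
  exact div_nonneg (mul_nonneg_of_nonpos_of_nonpos (by linarith) (by linarith)) hu.1.le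

lemma mixGap_antitoneOn_Icc (hβ0 : 0 < β) (hβ1 : β < 1) :
    AntitoneOn (mixGap β) (Icc (β / (1 - β)) 1) := by
  have h1β : 0 < 1 - β := by linarith
  have hpos : Icc (β / (1 - β)) 1 ⊆ Ioi 0 := fun u hu ↦ (div_pos hβ0 h1β).trans_le hu.1
  refine antitoneOn_of_hasDerivWithinAt_nonpos (convex_Icc _ _) (continuousOn_mixGap β hpos)
    (fun u hu ↦ (hasDerivAt_mixGap β (hpos (interior_subset hu))).hasDerivWithinAt)
    fun u hu ↦ ?_
  rw [interior_Icc] at hu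
  have hu₀ : β ≤ (1 - β) * u := (div_le_iff₀' h1β).1 hu.1.le
  exact div_nonpos_of_nonpos_of_nonneg
    (mul_nonpos_of_nonpos_of_nonneg (by linarith [hu.2]) (by linarith))
    (hpos (Ioo_subset_Icc_self hu)).le

lemma mixGap_monotoneOn_Ici (hβ : β ≤ 1 / 2) : MonotoneOn (mixGap β) (Ici 1) := by
  have hpos : Ici (1 : ℝ) ⊆ Ioi 0 := Ici_subset_Ioi.2 one_pos
  refine monotoneOn_of_hasDerivWithinAt_nonneg (convex_Ici _) (continuousOn_mixGap β hpos)
    (fun u hu ↦ (hasDerivAt_mixGap β (hpos (interior_subset hu))).hasDerivWithinAt)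
    fun u hu ↦ ?_
  rw [interior_Ici] at hu
  have hu1 : 1 < u := hu
  exact div_nonneg (mul_nonneg (by linarith) (by nlinarith)) (by linarith)

lemma mixGap_nonneg_of_le {s u : ℝ} (hβ0 : 0 < β) (hβ : β ≤ 1 / 2) (hs : 0 < s)
    (hgs : 0 ≤ mixGap β s) (hsu : s ≤ u) : 0 ≤ mixGap β u := by
  have hu₀ : β / (1 - β) ≤ 1 := (div_le_one (by linarith)).2 (by linarith)
  rcases le_total u (β / (1 - β)) with hu | hu
  · exact hgs.trans (mixGap_monotoneOn_Ioc hβ ⟨hs, hsu.trans hu⟩ ⟨hs.trans_le hsu, hu⟩ hsu)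
  rcases le_total u 1 with hu1 | hu1
  · exact (mixGap_one β).ge.trans
      (mixGap_antitoneOn_Icc hβ0 (by linarith) ⟨hu, hu1⟩ ⟨hu₀, le_rfl⟩ hu1)
  · exact (mixGap_one β).ge.trans (mixGap_monotoneOn_Ici hβ self_mem_Ici hu1 hu1)

end MixGap

lemma exp_neg_half_mem_Icc : exp (-(1 / 2)) ∈ Icc (9 / 16 : ℝ) (16 / 25) := by
  have hsq : exp (-(1 / 2)) ^ 2 = exp (-1) := by rw [← exp_nat_mul]; norm_num
  have := exp_pos (-(1 / 2))
  constructor <;> nlinarith [exp_neg_one_gt_d9, exp_neg_one_lt_d9]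

lemma mul_exp_neg_half_lt {L : ℝ} (hL : 0 < L) :
    L * exp (-(L / 2)) < 1 - exp (-(L / 2)) ^ 2 := by
  have h := self_lt_sinh_iff.2 (half_pos hL)
  have hinv : exp (L / 2) * exp (-(L / 2)) = 1 := by rw [← exp_add]; simp
  rw [sinh_eq] at h
  nlinarith [exp_pos (-(L / 2))]

lemma mixGap_exp_neg_half_nonneg {L : ℝ} (hL : 0 < L) :
    0 ≤ mixGap (0.36 / max L 1) (exp (-(L / 2))) := by
  set s := exp (-(L / 2))
  have hs0 : 0 < s := exp_pos _
  have hs1 : s < 1 := exp_lt_one_iff.2 (by linarith)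
  have hLs := mul_exp_neg_half_lt hL
  have hgap : ∀ β, mixGap β s = (1 - s) ^ 2 / 2 + β / 2 * (1 - s ^ 2) - β * L / 2 := by
    intro β; simp only [mixGap, s, log_exp]; ring
  obtain ⟨h916, h1625⟩ := exp_neg_half_mem_Icc
  rcases le_total L 1 with hL1 | hL1
  · -- multiplied by `s`, the gap is at least `0.02 (1 - s) ^ 2 (16 s - 9)`
    have hs : 9 / 16 ≤ s := h916.trans (exp_le_exp.2 (by linarith))
    rw [max_eq_right hL1, hgap]
    have h16 : (0 : ℝ) ≤ 16 * s - 9 := by linarith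
    nlinarith [mul_nonneg (mul_nonneg (sq_nonneg (1 - s)) hs0.le) h16]
  · have hs : s ≤ 16 / 25 := (exp_le_exp.2 (by linarith)).trans h1625
    rw [max_eq_left hL1, hgap, div_mul_cancel₀ _ hL.ne']
    -- the gap is at least `(1 - s) ((1 - s) / 2 - 0.18)`
    have : 0.18 * s ≤ 0.36 / L / 2 * (1 - s ^ 2) := by
      rw [div_div, div_mul_eq_mul_div, le_div_iff₀ (by positivity)]; nlinarith
    nlinarith

lemma exp_neg_half_mul_le {L x : ℝ} (hL : 0 < L) (hx : x ∈ Icc (-1) 1) :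
    exp (-(L / 2) * x) ≤ (1 / 2 - 0.18 / max L 1) * exp (-L * x) + (1 / 2 + 0.18 / max L 1)
      - 0.18 / max L 1 * L * x := by
  have hM : 1 ≤ max L 1 := le_max_right _ _
  have hβ : 0.36 / max L 1 ≤ 1 / 2 := (div_le_iff₀ (by positivity)).2 (by linarith)
  have hsu : exp (-(L / 2)) ≤ exp (-(L / 2) * x) := exp_le_exp.2 (by nlinarith [hx.1, hx.2])
  have hgap :=
    mixGap_nonneg_of_le (by positivity) hβ (exp_pos _) (mixGap_exp_neg_half_nonneg hL) hsu
  have hsq : exp (-L * x) = exp (-(L / 2) * x) ^ 2 := by rw [← exp_nat_mul]; ring_nf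
  rw [mixGap, log_exp] at hgap
  rw [hsq]
  linear_combination hgap

lemma integral_exp_neg_half_mul_le {Ω : Type*} [MeasurableSpace Ω] {μ : Measure Ω}
    [IsProbabilityMeasure μ] {V η : ℝ} (hV : 0 < V) (hη : 0 < η) {Z : Ω → ℝ}
    (hZ : AEMeasurable Z μ) (hZbdd : ∀ᵐ ω ∂μ, Z ω ∈ Icc (-V) V) :
    ∫ ω, exp (-(η / 2) * Z ω) ∂μ ≤ (1 / 2 - 0.18 / max (V * η) 1) * ∫ ω, exp (-η * Z ω) ∂μ
      + (1 / 2 + 0.18 / max (V * η) 1) - 0.18 / max (V * η) 1 * η * ∫ ω, Z ω ∂μ := by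
  set c := 0.18 / max (V * η) 1
  have hZint : Integrable Z μ := .of_mem_Icc (-V) V hZ hZbdd
  have hexp (t : ℝ) : Integrable (fun ω ↦ exp (t * Z ω)) μ :=
    ProbabilityTheory.integrable_exp_mul_of_mem_Icc hZ hZbdd
  have hpt : ∀ᵐ ω ∂μ, exp (-(η / 2) * Z ω)
      ≤ (1 / 2 - c) * exp (-η * Z ω) + (1 / 2 + c) - c * η * Z ω := by
    filter_upwards [hZbdd] with ω hω
    obtain ⟨x, hx, hZx⟩ : ∃ x ∈ Icc (-1 : ℝ) 1, Z ω = V * x :=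
      ⟨Z ω / V, ⟨(le_div_iff₀ hV).2 (by linarith [hω.1]), (div_le_one hV).2 hω.2⟩, by field_simp⟩
    rw [hZx]
    calc exp (-(η / 2) * (V * x)) = exp (-(V * η / 2) * x) := by ring_nf
      _ ≤ _ := exp_neg_half_mul_le (mul_pos hV hη) hx
      _ = _ := by simp only [c]; ring_nf
  have hA : Integrable (fun ω ↦ (1 / 2 - c) * exp (-η * Z ω) + (1 / 2 + c)) μ :=
    ((hexp _).const_mul _).add (integrable_const _)
  calc ∫ ω, exp (-(η / 2) * Z ω) ∂μ
      ≤ ∫ ω, ((1 / 2 - c) * exp (-η * Z ω) + (1 / 2 + c) - c * η * Z ω) ∂μ :=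
        integral_mono_ae (hexp _) (hA.sub (hZint.const_mul _)) hpt
    _ = _ := by
      rw [integral_sub hA (hZint.const_mul _), integral_add ((hexp _).const_mul _)
        (integrable_const _), integral_const_mul, integral_const_mul, integral_const]
      simp

theorem stochastic_mixability_concentration_bounded_general
    {Ω : Type*} [MeasurableSpace Ω] (μ : Measure Ω) [IsProbabilityMeasure μ]
    (V : ℝ) (hV : 0 < V)
    (Z : Ω → ℝ) (hZmeas : Measurable Z)
    (hZbdd : ∀ᵐ ω ∂μ, Z ω ∈ Set.Icc (-V) V)
    (n : ℕ) (a : ℝ)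
    (hmean : ∫ ω, Z ω ∂μ = a / n)
    (η : ℝ) (hη : 0 < η)
    (hcgf : ∫ ω, Real.exp (-η * Z ω) ∂μ = 1) :
    ∫ ω, Real.exp (-(η / 2) * Z ω) ∂μ ≤ 1 - 0.18 * η * a / (max (V * η) 1 * n) := by
  have h := integral_exp_neg_half_mul_le hV hη hZmeas.aemeasurable hZbdd
  rw [hcgf, hmean] at h
  calc _ ≤ _ := h
    _ = _ := by ring

/-- **Stochastic mixability concentration for `[-V, V]`-valued excess losses.**
Let `Z` take values in `[-V, V]` a.s. with `E[Z] = a/n` for `a > 0`, and suppose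
`E[exp(-η Z)] = 1` for some `η > 0` with `a/(V n) < (cosh(V η) - 1)/sinh(V η)`.
Then `E[exp(-(η/2) Z)] ≤ 1 - 0.18 η a / (max (V η) 1 · n)`. -/
theorem stochastic_mixability_concentration_bounded
    {Ω : Type*} [MeasurableSpace Ω] (μ : Measure Ω) [IsProbabilityMeasure μ]
    (V : ℝ) (hV : 0 < V)
    (Z : Ω → ℝ) (hZmeas : Measurable Z)
    (hZbdd : ∀ᵐ ω ∂μ, Z ω ∈ Set.Icc (-V) V)
    (n : ℕ) (hn : 0 < n) (a : ℝ) (ha : 0 < a)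
    (hmean : ∫ ω, Z ω ∂μ = a / n)
    (η : ℝ) (hη : 0 < η)
    (hcgf : ∫ ω, Real.exp (-η * Z ω) ∂μ = 1)
    (hint : a / (V * n) < (Real.cosh (V * η) - 1) / Real.sinh (V * η)) :
    ∫ ω, Real.exp (-(η / 2) * Z ω) ∂μ ≤ 1 - 0.18 * η * a / (max (V * η) 1 * n) :=
  stochastic_mixability_concentration_bounded_general μ V hV Z hZmeas hZbdd n a hmean η hη hcgf
end

section
/- Let (ℓ, F, P) be an η*-stochastically mixable statistical learning problem with |F| = N finite, ℓ a nonnegative loss, and ℓ(Y, f(X)) ≤ V almost surely for every f ∈ F, for a constant V. Then for all n ≥ 1 and δ ∈ (0,1), with probability at least 1 - δ over an i.i.d. sample of size n from P, every empirical risk minimizer f̂ satisfies P(ℓ∘f̂) ≤ P(ℓ∘f*) + 6 max{V, 1/η*} (log(1/δ) + log N) / n. -/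
/-!
Write `Z_f` for the excess loss of `f`. It takes values in `[-V, V]`, and mixability at `η*`
passes by convexity of `t ↦ E exp (-t Z_f)` to `η = 1 / max V (1/η*)`, where `|η Z_f| ≤ 1`.
On `[-1, 1]` we have `exp (-x/3) ≤ 5/6 + exp (-x)/6 - x/6`, so `E exp (-η Z_f / 3) ≤
exp (-η E Z_f / 6)`, and a Chernoff bound shows that the empirical excess risk of a fixed `f`
is nonpositive with probability at most `exp (-n η E Z_f / 6)`. This is at most `δ / N` once
the excess risk of `f` exceeds the stated bound. An empirical risk minimizer has nonpositive
empirical excess risk, so a union bound over the `N` functions concludes.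
-/

open MeasureTheory ProbabilityTheory Real Finset

theorem Real.exp_neg_div_three_le {x : ℝ} (hx : |x| ≤ 1) :
    exp (-(x / 3)) ≤ 5 / 6 + exp (-x) / 6 - x / 6 := by
  have hx3 : |-(x / 3)| ≤ 1 := by rw [abs_neg, abs_div]; norm_num; linarith
  have h_third := Real.exp_bound hx3 (n := 5) (by norm_num)
  have h_neg := Real.exp_bound (x := -x) (by rwa [abs_neg]) (n := 5) (by norm_num)
  simp only [sum_range_succ, sum_range_zero, abs_neg, abs_div] at h_third h_neg
  norm_num [Nat.factorial] at h_third h_neg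
  have h_pow : |x| ^ 5 ≤ x ^ 4 :=
    Even.pow_abs (n := 4) (by decide) x ▸ pow_le_pow_of_le_one (abs_nonneg x) hx (by norm_num)
  rw [abs_le] at h_third h_neg
  nlinarith [abs_le.mp hx, sq_nonneg x, sq_nonneg (x ^ 2), h_third.2, h_neg.1]

lemma MeasureTheory.ofReal_one_sub_le_of_compl_subset_biUnion {ι Ω : Type*}
    [MeasurableSpace Ω] {μ : Measure Ω} [IsProbabilityMeasure μ] {s : Finset ι}
    {A : ι → Set Ω} {S : Set Ω} {δ : ℝ} {N : ℕ} (hδ : 0 ≤ δ) (hN : 0 < N) (hs : #s ≤ N)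
    (hA : ∀ i ∈ s, μ (A i) ≤ ENNReal.ofReal (δ / N)) (hS : Sᶜ ⊆ ⋃ i ∈ s, A i) :
    ENNReal.ofReal (1 - δ) ≤ μ S := by
  have h_compl : μ Sᶜ ≤ ENNReal.ofReal δ :=
    calc μ Sᶜ ≤ ∑ i ∈ s, μ (A i) := (measure_mono hS).trans (measure_biUnion_finset_le s A)
      _ ≤ #s • ENNReal.ofReal (δ / N) := sum_le_card_nsmul s _ _ hA
      _ ≤ N * ENNReal.ofReal (δ / N) := by rw [nsmul_eq_mul]; gcongr
      _ = ENNReal.ofReal δ := by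
        rw [← ENNReal.ofReal_natCast, ← ENNReal.ofReal_mul (by positivity),
          mul_div_cancel₀ _ (by positivity)]
  calc ENNReal.ofReal (1 - δ) = 1 - ENNReal.ofReal δ := by
        rw [ENNReal.ofReal_sub _ hδ, ENNReal.ofReal_one]
    _ ≤ 1 - μ Sᶜ := tsub_le_tsub_left h_compl 1
    _ ≤ μ S := by
        rw [tsub_le_iff_right, ← measure_univ (μ := μ)]
        exact measure_univ_le_add_compl S

namespace ProbabilityTheory

variable {Ω : Type*} [MeasurableSpace Ω] {μ : Measure Ω} [IsProbabilityMeasure μ] {X : Ω → ℝ}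

lemma mgf_neg_le_one_of_le {s t : ℝ} (hs : 0 ≤ s) (hst : s ≤ t)
    (h_int : Integrable (fun ω => exp (-t * X ω)) μ) (h : mgf X μ (-t) ≤ 1) :
    mgf X μ (-s) ≤ 1 := by
  set θ := s / t
  have hθ₀ : 0 ≤ θ := div_nonneg hs (hs.trans hst)
  have hθ₁ : θ ≤ 1 := div_le_one_of_le₀ hst (hs.trans hst)
  have hθs : θ * -t = -s := by
    rcases (hs.trans hst).eq_or_lt with ht | ht
    · simp [← ht, le_antisymm (ht ▸ hst) hs]
    · rw [mul_neg, div_mul_cancel₀ s ht.ne']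
  have h_convex : ∀ ω, exp (-s * X ω) ≤ θ * exp (-t * X ω) + (1 - θ) := fun ω => by
    simpa [← hθs, mul_assoc] using convexOn_exp.2 (Set.mem_univ (-t * X ω)) (Set.mem_univ 0)
      hθ₀ (sub_nonneg.2 hθ₁) (add_sub_cancel θ 1)
  calc mgf X μ (-s) ≤ ∫ ω, (θ * exp (-t * X ω) + (1 - θ)) ∂μ :=
        integral_mono_of_nonneg (ae_of_all _ fun _ => (exp_pos _).le)
          ((h_int.const_mul θ).add (integrable_const _)) (ae_of_all _ h_convex)
    _ = θ * mgf X μ (-t) + (1 - θ) := by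
        rw [integral_add (h_int.const_mul θ) (integrable_const _), integral_const_mul]
        simp [mgf]
    _ ≤ 1 := by nlinarith

lemma mgf_neg_div_three_le_exp {η : ℝ} (hX : AEMeasurable X μ) (hb : ∀ᵐ ω ∂μ, |η * X ω| ≤ 1)
    (h : mgf X μ (-η) ≤ 1) : mgf X μ (-(η / 3)) ≤ exp (-(η / 6) * μ[X]) := by
  have hηX : ∀ᵐ ω ∂μ, η * X ω ∈ Set.Icc (-1) 1 := hb.mono fun _ => abs_le.mp
  have h_int : Integrable (fun ω => η * X ω) μ := .of_mem_Icc _ _ (hX.const_mul η) hηX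
  have h_int_exp : Integrable (fun ω => exp (-η * X ω)) μ := by
    simpa [neg_mul] using integrable_exp_mul_of_mem_Icc (t := -1) (hX.const_mul η) hηX
  have h_int_add : Integrable (fun ω => 5 / 6 + exp (-η * X ω) / 6) μ :=
    (integrable_const _).add (h_int_exp.div_const _)
  have h_pointwise :
      ∀ᵐ ω ∂μ, exp (-(η / 3) * X ω) ≤ 5 / 6 + exp (-η * X ω) / 6 - η * X ω / 6 := by
    filter_upwards [hb] with ω hω
    convert Real.exp_neg_div_three_le hω using 2 <;> ring_nf
  calc mgf X μ (-(η / 3)) ≤ ∫ ω, (5 / 6 + exp (-η * X ω) / 6 - η * X ω / 6) ∂μ :=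
        integral_mono_of_nonneg (ae_of_all _ fun _ => (exp_pos _).le)
          (h_int_add.sub (h_int.div_const _)) h_pointwise
    _ = 5 / 6 + mgf X μ (-η) / 6 - η * μ[X] / 6 := by
        rw [integral_sub h_int_add (h_int.div_const _),
          integral_add (integrable_const _) (h_int_exp.div_const _), integral_div, integral_div,
          integral_div, integral_const_mul]
        simp [mgf]
    _ ≤ 1 + -(η / 6) * μ[X] := by linarith
    _ ≤ exp (-(η / 6) * μ[X]) := by linarith [add_one_le_exp (-(η / 6) * μ[X])]

variable {ι : Type*} [Fintype ι]

lemma mgf_pi_sum_eq_pow (t : ℝ) :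
    mgf (fun ω : ι → Ω => ∑ i, X (ω i)) (Measure.pi fun _ => μ) t
      = mgf X μ t ^ Fintype.card ι := by
  simp only [mgf, mul_sum, exp_sum]
  exact integral_fintype_prod_eq_pow fun x => exp (t * X x)

lemma measure_pi_sum_nonpos_le_mgf_pow {t : ℝ} (ht : t ≤ 0)
    (h_int : Integrable (fun ω => exp (t * X ω)) μ) :
    Measure.pi (fun _ : ι => μ) {ω | ∑ i, X (ω i) ≤ 0}
      ≤ ENNReal.ofReal (mgf X μ t ^ Fintype.card ι) := by
  rw [← ofReal_measureReal, ← mgf_pi_sum_eq_pow]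
  gcongr
  simpa using measure_le_le_exp_mul_mgf 0 ht (by
    simp only [mul_sum, exp_sum]
    exact Integrable.fintype_prod (f := fun _ a => exp (t * X a)) fun _ => h_int)

lemma measure_pi_sum_nonpos_le_exp {η : ℝ} (hη : 0 ≤ η) (hX : AEMeasurable X μ)
    (hb : ∀ᵐ ω ∂μ, |η * X ω| ≤ 1) (h : mgf X μ (-η) ≤ 1) :
    Measure.pi (fun _ : ι => μ) {ω | ∑ i, X (ω i) ≤ 0}
      ≤ ENNReal.ofReal (exp (-(Fintype.card ι * (η * μ[X] / 6)))) := by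
  have h_int : Integrable (fun ω => exp (-(η / 3) * X ω)) μ := by
    simpa [neg_div, div_eq_inv_mul, mul_assoc] using integrable_exp_mul_of_mem_Icc (t := -3⁻¹)
      (hX.const_mul η) (hb.mono fun _ => abs_le.mp)
  calc Measure.pi (fun _ : ι => μ) {ω | ∑ i, X (ω i) ≤ 0}
      ≤ ENNReal.ofReal (mgf X μ (-(η / 3)) ^ Fintype.card ι) :=
        measure_pi_sum_nonpos_le_mgf_pow (by linarith) h_int
    _ ≤ ENNReal.ofReal (exp (-(η / 6) * μ[X]) ^ Fintype.card ι) := by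
        gcongr
        exacts [mgf_nonneg, mgf_neg_div_three_le_exp hX hb h]
    _ = ENNReal.ofReal (exp (-(Fintype.card ι * (η * μ[X] / 6)))) := by
        rw [← exp_nat_mul]; ring_nf

lemma measure_pi_sum_nonpos_le_of_lt {c δ : ℝ} {N n : ℕ} (hc : 0 < c) (hδ : 0 < δ)
    (hN : 0 < N) (hX : AEMeasurable X μ) (hb : ∀ᵐ ω ∂μ, |X ω| ≤ c) (h : mgf X μ (-c⁻¹) ≤ 1)
    (hε : 6 * c * (Real.log (1 / δ) + Real.log N) < n * μ[X]) :
    Measure.pi (fun _ : Fin n => μ) {ω | ∑ i, X (ω i) ≤ 0} ≤ ENNReal.ofReal (δ / N) := by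
  have h_scaled : ∀ᵐ ω ∂μ, |c⁻¹ * X ω| ≤ 1 := hb.mono fun ω hω => by
    rwa [abs_mul, abs_inv, abs_of_pos hc, inv_mul_le_one₀ hc]
  have h_chernoff := measure_pi_sum_nonpos_le_exp (ι := Fin n) (by positivity) hX h_scaled h
  rw [Fintype.card_fin] at h_chernoff
  refine h_chernoff.trans (ENNReal.ofReal_le_ofReal ?_)
  calc exp (-(n * (c⁻¹ * μ[X] / 6))) ≤ exp (-(Real.log (1 / δ) + Real.log N)) := by
        rw [exp_le_exp, neg_le_neg_iff, show (n : ℝ) * (c⁻¹ * μ[X] / 6) = n * μ[X] / (6 * c)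
          by field_simp, le_div_iff₀ (by positivity)]
        linarith
    _ = δ / N := by
        rw [exp_neg, exp_add, exp_log (by positivity), exp_log (by positivity)]
        field_simp

lemma ofReal_one_sub_le_measure_pi_integral_le_of_sum_nonpos {κ : Type*} {F : Finset κ}
    (hF : F.Nonempty) {W : κ → Ω → ℝ} {c δ : ℝ} {n : ℕ} (hn : 0 < n) (hc : 0 < c) (hδ : 0 < δ)
    (hW_meas : ∀ f ∈ F, AEMeasurable (W f) μ) (hW_bdd : ∀ f ∈ F, ∀ᵐ ω ∂μ, |W f ω| ≤ c)
    (hW_mgf : ∀ f ∈ F, mgf (W f) μ (-c⁻¹) ≤ 1) :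
    ENNReal.ofReal (1 - δ) ≤ Measure.pi (fun _ : Fin n => μ) {ω | ∀ f ∈ F,
      ∑ j, W f (ω j) ≤ 0 → μ[W f] ≤ 6 * c * (Real.log (1 / δ) + Real.log #F) / n} := by
  refine ofReal_one_sub_le_of_compl_subset_biUnion hδ.le hF.card_pos
    (card_filter_le F fun f => 6 * c * (Real.log (1 / δ) + Real.log #F) / n < μ[W f])
    (fun f hf => (mem_filter.1 hf).elim fun hf hε => measure_pi_sum_nonpos_le_of_lt hc hδ
      hF.card_pos (hW_meas f hf) (hW_bdd f hf) (hW_mgf f hf)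
      ((div_lt_iff₀' (Nat.cast_pos.2 hn)).1 hε)) fun ω hω => ?_
  simp only [Set.mem_compl_iff, Set.mem_ofPred_eq, not_forall, not_le] at hω
  obtain ⟨f, hf, h_sum, h_gt⟩ := hω
  exact Set.mem_biUnion (mem_filter.2 ⟨hf, h_gt⟩) h_sum

end ProbabilityTheory

theorem finite_class_exact_oracle_inequality_general
    {X Y : Type*} [MeasurableSpace X] [MeasurableSpace Y]
    (P : Measure (X × Y)) [IsProbabilityMeasure P]
    (ℓ : Y → ℝ → ℝ) (F : Finset (X → ℝ)) (hF : F.Nonempty)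
    (hmeas : ∀ f ∈ F, Measurable fun z : X × Y => ℓ z.2 (f z.1))
    (hnonneg : ∀ f ∈ F, ∀ z : X × Y, 0 ≤ ℓ z.2 (f z.1))
    (V : ℝ) (hbdd : ∀ f ∈ F, ∀ᵐ z ∂P, ℓ z.2 (f z.1) ≤ V)
    (fStar : X → ℝ) (hfStarMem : fStar ∈ F)
    (ηStar : ℝ) (hηStar : 0 < ηStar)
    (hmix : ∀ f ∈ F,
      Real.log (∫ z, Real.exp (-ηStar * (ℓ z.2 (f z.1) - ℓ z.2 (fStar z.1))) ∂P) ≤ 0)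
    (n : ℕ) (hn : 1 ≤ n) (δ : ℝ) (hδ : δ ∈ Set.Ioo (0 : ℝ) 1) :
    ENNReal.ofReal (1 - δ) ≤
      (Measure.pi fun _ : Fin n => P)
        {ω : Fin n → X × Y | ∀ f ∈ F,
          (∀ g ∈ F, (1 / n : ℝ) * ∑ j, ℓ (ω j).2 (f (ω j).1)
              ≤ (1 / n : ℝ) * ∑ j, ℓ (ω j).2 (g (ω j).1)) →
          ∫ z, ℓ z.2 (f z.1) ∂P ≤ (∫ z, ℓ z.2 (fStar z.1) ∂P)
            + 6 * max V (1 / ηStar) * (Real.log (1 / δ) + Real.log F.card) / n} := by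
  obtain ⟨hδ₀, -⟩ := hδ
  set c := max V (1 / ηStar)
  have hV : 0 ≤ V := by
    obtain ⟨z, hz⟩ := (hbdd fStar hfStarMem).exists
    exact (hnonneg fStar hfStarMem z).trans hz
  have hc : 0 < c := lt_max_of_lt_right (by positivity)
  set W : (X → ℝ) → X × Y → ℝ := fun f z => ℓ z.2 (f z.1) - ℓ z.2 (fStar z.1) with hW
  have hW_meas : ∀ f ∈ F, AEMeasurable (W f) P := fun f hf =>
    ((hmeas f hf).sub (hmeas fStar hfStarMem)).aemeasurable
  have hW_bdd : ∀ f ∈ F, ∀ᵐ z ∂P, |W f z| ≤ c := fun f hf => by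
    filter_upwards [hbdd f hf, hbdd fStar hfStarMem] with z hfz hfStarz
    exact (abs_sub_le_of_nonneg_of_le (hnonneg f hf z) hfz (hnonneg fStar hfStarMem z)
      hfStarz).trans (le_max_left _ _)
  have hW_mgf : ∀ f ∈ F, mgf (W f) P (-c⁻¹) ≤ 1 := fun f hf =>
    mgf_neg_le_one_of_le (by positivity) (inv_le_of_inv_le₀ hηStar (by simp [c]))
      (integrable_exp_mul_of_mem_Icc (hW_meas f hf) ((hW_bdd f hf).mono fun _ => abs_le.mp))
      ((log_nonpos_iff mgf_nonneg).1 (hmix f hf))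
  have h_int : ∀ f ∈ F, Integrable (fun z => ℓ z.2 (f z.1)) P := fun f hf =>
    .of_mem_Icc 0 V (hmeas f hf).aemeasurable ((hbdd f hf).mono fun z hz => ⟨hnonneg f hf z, hz⟩)
  refine (ofReal_one_sub_le_measure_pi_integral_le_of_sum_nonpos hF hn hc hδ₀ hW_meas hW_bdd
    hW_mgf).trans (measure_mono fun ω hω f hf hERM => ?_)
  have h_sum : ∑ j, W f (ω j) ≤ 0 := by
    simpa only [hW, sum_sub_distrib, sub_nonpos] using
      le_of_mul_le_mul_left (hERM fStar hfStarMem) (by positivity)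
  have h_excess := hω f hf h_sum
  rw [integral_sub (h_int f hf) (h_int fStar hfStarMem)] at h_excess
  linarith

/-- **Finite classes exact oracle inequality.**
Let `(ℓ, F, P)` be `η*`-stochastically mixable with `F` finite of cardinality `N`,
`ℓ` a nonnegative loss bounded by `V` a.s. on `F`.  Then for all `n ≥ 1`, with
probability at least `1 - δ` over an i.i.d. `n`-sample from `P`, every empirical
risk minimizer `f̂` satisfies
`P(ℓ∘f̂) ≤ P(ℓ∘f*) + 6 max{V, 1/η*} (log(1/δ) + log N) / n`. -/
theorem finite_class_exact_oracle_inequality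
    {X Y : Type*} [MeasurableSpace X] [MeasurableSpace Y]
    (P : Measure (X × Y)) [IsProbabilityMeasure P]
    (ℓ : Y → ℝ → ℝ) (F : Finset (X → ℝ)) (hF : F.Nonempty)
    (hmeas : ∀ f ∈ F, Measurable fun z : X × Y => ℓ z.2 (f z.1))
    (hnonneg : ∀ f ∈ F, ∀ z : X × Y, 0 ≤ ℓ z.2 (f z.1))
    (V : ℝ) (hbdd : ∀ f ∈ F, ∀ᵐ z ∂P, ℓ z.2 (f z.1) ≤ V)
    (fStar : X → ℝ) (hfStarMem : fStar ∈ F)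
    (hfStarMin : ∀ f ∈ F, ∫ z, ℓ z.2 (fStar z.1) ∂P ≤ ∫ z, ℓ z.2 (f z.1) ∂P)
    (ηStar : ℝ) (hηStar : 0 < ηStar)
    (hmix : ∀ f ∈ F,
      Real.log (∫ z, Real.exp (-ηStar * (ℓ z.2 (f z.1) - ℓ z.2 (fStar z.1))) ∂P) ≤ 0)
    (hlargest : ∀ η : ℝ, 0 < η →
      (∀ f ∈ F,
        Real.log (∫ z, Real.exp (-η * (ℓ z.2 (f z.1) - ℓ z.2 (fStar z.1))) ∂P) ≤ 0) →
      η ≤ ηStar)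
    (n : ℕ) (hn : 1 ≤ n) (δ : ℝ) (hδ : δ ∈ Set.Ioo (0 : ℝ) 1) :
    ENNReal.ofReal (1 - δ) ≤
      (Measure.pi fun _ : Fin n => P)
        {ω : Fin n → X × Y | ∀ f ∈ F,
          (∀ g ∈ F, (1 / n : ℝ) * ∑ j, ℓ (ω j).2 (f (ω j).1)
              ≤ (1 / n : ℝ) * ∑ j, ℓ (ω j).2 (g (ω j).1)) →
          ∫ z, ℓ z.2 (f z.1) ∂P ≤ (∫ z, ℓ z.2 (fStar z.1) ∂P)
            + 6 * max V (1 / ηStar) * (Real.log (1 / δ) + Real.log F.card) / n} :=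
  finite_class_exact_oracle_inequality_general P ℓ F hF hmeas hnonneg V hbdd fStar hfStarMem ηStar
    hηStar hmix n hn δ hδ
end

section
/- Let (ℓ, F, P) be a statistical learning problem with losses ℓ(Y, f(X)) bounded in [0, V] almost surely for all f ∈ F, let f* ∈ F be a risk minimizer, and for ε > 0 set G_ε := {f*} ∪ {f ∈ F : ‖f - f*‖_{L₁(P)} ≥ ε}. Assume G_ε \ {f*} is compact in the L₁(P) topology and the map f ↦ P(ℓ∘f) is continuous on F with respect to the L₁(P) pseudometric. If there exists ε > 0 such that (ℓ, G_ε, P) is not η-stochastically mixable for any η > 0, then there exists g* ∈ F with ‖g* - f*‖_{L₁(P)} ≥ ε and P(ℓ∘g*) = P(ℓ∘f*); that is, the risk minimizer over F is not unique. -/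
/-!
If `(ℓ, G_ε, P)` is not `η`-mixable, a witness `f ∈ G_ε` has `log E exp(-η Z_f) > 0`,
and `f ≠ f*` since `Z_{f*} = 0`. As `|Z_f| ≤ V`, the bound `exp t ≤ 1 + t + t²` for `|t| ≤ 1`
turns this into `E Z_f < η V²` once `η V ≤ 1`. Letting `η → 0` produces approximate minimizers in
the compact set `G_ε \ {f*}`; a limit point is an exact minimizer by continuity of the risk.
-/

open MeasureTheory Real Filter Topology

theorem integral_lt_mul_sq_of_log_integral_exp_pos {α : Type*} [MeasurableSpace α]
    {μ : Measure α} [IsProbabilityMeasure μ] {Z : α → ℝ} {V η : ℝ}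
    (hZ : Integrable Z μ) (hZV : ∀ᵐ a ∂μ, |Z a| ≤ V) (hη : 0 < η) (hηV : η * V ≤ 1)
    (hpos : 0 < log (∫ a, exp (-η * Z a) ∂μ)) :
    ∫ a, Z a ∂μ < η * V ^ 2 := by
  have hone : 1 < ∫ a, exp (-η * Z a) ∂μ :=
    (log_pos_iff (integral_nonneg fun _ => (exp_pos _).le)).1 hpos
  have hexp : Integrable (fun a => exp (-η * Z a)) μ :=
    Integrable.of_integral_ne_zero (by linarith)
  have hlin : Integrable (fun a => 1 + -η * Z a) μ := (integrable_const 1).add (hZ.const_mul _)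
  have hquad : ∫ a, exp (-η * Z a) ∂μ ≤ ∫ a, (1 + -η * Z a + (η * V) ^ 2) ∂μ := by
    refine integral_mono_ae hexp (hlin.add (integrable_const _)) ?_
    filter_upwards [hZV] with a ha
    have hηZ : |-η * Z a| ≤ η * V := by
      rw [abs_mul, abs_neg, abs_of_pos hη]
      exact mul_le_mul_of_nonneg_left ha hη.le
    have hsq : (-η * Z a) ^ 2 ≤ (η * V) ^ 2 := sq_le_sq' (abs_le.1 hηZ).1 (abs_le.1 hηZ).2
    linarith [(abs_le.1 (abs_exp_sub_one_sub_id_le (hηZ.trans hηV))).2]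
  rw [integral_add hlin (integrable_const _), integral_add (integrable_const 1) (hZ.const_mul _),
    integral_const_mul] at hquad
  simp only [integral_const, probReal_univ, one_smul] at hquad
  nlinarith

theorem tendsto_of_forall_lt_imp_abs_sub_lt {α ι : Type*} {l : Filter ι} {s : Set α}
    {R D : α → ℝ} {r : ℝ} {u : ι → α}
    (hR : ∀ c > 0, ∃ d > 0, ∀ f ∈ s, D f < d → |R f - r| < c)
    (hu : ∀ᶠ i in l, u i ∈ s) (hD : Tendsto (fun i => D (u i)) l (𝓝 0)) :
    Tendsto (fun i => R (u i)) l (𝓝 r) := by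
  refine Metric.tendsto_nhds.2 fun c hc => ?_
  obtain ⟨d, hd, hRd⟩ := hR c hc
  filter_upwards [hu, hD.eventually (eventually_lt_nhds hd)] with i hi hDi
  exact hRd _ hi hDi

theorem integrable_of_ae_mem_Icc {α : Type*} [MeasurableSpace α] {μ : Measure α}
    [IsFiniteMeasure μ] {a : α → ℝ} {V : ℝ} (ha : Measurable a)
    (haV : ∀ᵐ x ∂μ, a x ∈ Set.Icc 0 V) : Integrable a μ :=
  Integrable.of_bound ha.aestronglyMeasurable V <| by
    filter_upwards [haV] with x hx
    rw [norm_of_nonneg hx.1]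
    exact hx.2

theorem integral_sub_integral_lt_of_log_integral_exp_pos {α : Type*} [MeasurableSpace α]
    {μ : Measure α} [IsProbabilityMeasure μ] {a b : α → ℝ} {V η : ℝ}
    (ha : Measurable a) (hb : Measurable b)
    (haV : ∀ᵐ x ∂μ, a x ∈ Set.Icc 0 V) (hbV : ∀ᵐ x ∂μ, b x ∈ Set.Icc 0 V)
    (hη : 0 < η) (hηV : η * V ≤ 1)
    (hpos : 0 < log (∫ x, exp (-η * (a x - b x)) ∂μ)) :
    ∫ x, a x ∂μ - ∫ x, b x ∂μ < η * V ^ 2 := by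
  have hint_a := integrable_of_ae_mem_Icc ha haV
  have hint_b := integrable_of_ae_mem_Icc hb hbV
  rw [← integral_sub hint_a hint_b]
  refine integral_lt_mul_sq_of_log_integral_exp_pos (hint_a.sub hint_b) ?_ hη hηV hpos
  filter_upwards [haV, hbV] with x hax hbx
  exact abs_sub_le_of_nonneg_of_le hax.1 hax.2 hbx.1 hbx.2

theorem exists_seq_pos_mul_le_one_tendsto_zero {V : ℝ} (hV : 0 ≤ V) :
    ∃ η : ℕ → ℝ, (∀ n, 0 < η n) ∧ (∀ n, η n * V ≤ 1) ∧ Tendsto η atTop (𝓝 0) := by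
  refine ⟨fun n => ((n : ℝ) + 1)⁻¹ / (V + 1), fun n => by positivity, fun n => ?_, ?_⟩
  · have : ((n : ℝ) + 1)⁻¹ ≤ 1 := inv_le_one_of_one_le₀ (by simp)
    rw [div_mul_eq_mul_div, div_le_one (by linarith)]
    nlinarith [inv_pos.2 (n.cast_add_one_pos (α := ℝ))]
  · simpa using tendsto_one_div_add_atTop_nhds_zero_nat.div_const (V + 1)

theorem non_unique_minimizers_general
    {X Y : Type*} [MeasurableSpace X] [MeasurableSpace Y]
    (P : Measure (X × Y)) [IsProbabilityMeasure P]
    (ℓ : Y → ℝ → ℝ) (F : Set (X → ℝ))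
    (hmeas : ∀ f ∈ F, Measurable fun z : X × Y => ℓ z.2 (f z.1))
    (V : ℝ) (hbdd : ∀ f ∈ F, ∀ᵐ z ∂P, ℓ z.2 (f z.1) ∈ Set.Icc 0 V)
    (fStar : X → ℝ) (hfStarMem : fStar ∈ F)
    (hfStarMin : ∀ f ∈ F, ∫ z, ℓ z.2 (fStar z.1) ∂P ≤ ∫ z, ℓ z.2 (f z.1) ∂P)
    (ε : ℝ)
    -- sequential compactness of `G_ε \ {f*}` in the `L₁(P)` pseudometric
    (hcompact : ∀ u : ℕ → (X → ℝ),
      (∀ k, u k ∈ F ∧ ε ≤ ∫ z, |u k z.1 - fStar z.1| ∂P) →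
      ∃ g, (g ∈ F ∧ ε ≤ ∫ z, |g z.1 - fStar z.1| ∂P) ∧
        ∃ φ : ℕ → ℕ, StrictMono φ ∧
          Filter.Tendsto (fun k => ∫ z, |u (φ k) z.1 - g z.1| ∂P)
            Filter.atTop (nhds 0))
    -- continuity of the risk on `F` w.r.t. the `L₁(P)` pseudometric
    (hcont : ∀ f ∈ F, ∀ c > 0, ∃ d > 0, ∀ g ∈ F,
      (∫ z, |f z.1 - g z.1| ∂P) < d →
      |(∫ z, ℓ z.2 (g z.1) ∂P) - ∫ z, ℓ z.2 (f z.1) ∂P| < c)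
    -- `(ℓ, G_ε, P)` is not `η`-stochastically mixable for any `η > 0`
    (hnotmix : ∀ η > 0, ∃ f,
      (f = fStar ∨ (f ∈ F ∧ ε ≤ ∫ z, |f z.1 - fStar z.1| ∂P)) ∧
      0 < Real.log (∫ z, Real.exp (-η * (ℓ z.2 (f z.1) - ℓ z.2 (fStar z.1))) ∂P)) :
    ∃ g ∈ F, ε ≤ (∫ z, |g z.1 - fStar z.1| ∂P) ∧
      (∫ z, ℓ z.2 (g z.1) ∂P) = ∫ z, ℓ z.2 (fStar z.1) ∂P := by
  have hV : 0 ≤ V := by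
    obtain ⟨z, hz⟩ := (hbdd fStar hfStarMem).exists
    exact hz.1.trans hz.2
  obtain ⟨η, hη, hηV, hη0⟩ := exists_seq_pos_mul_le_one_tendsto_zero hV
  have approx : ∀ n, ∃ f, (f ∈ F ∧ ε ≤ ∫ z, |f z.1 - fStar z.1| ∂P) ∧
      (∫ z, ℓ z.2 (f z.1) ∂P) - ∫ z, ℓ z.2 (fStar z.1) ∂P < η n * V ^ 2 := fun n => by
    obtain ⟨f, hfG, hpos⟩ := hnotmix (η n) (hη n)
    have hfF := hfG.resolve_left (by rintro rfl; simp at hpos)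
    exact ⟨f, hfF, integral_sub_integral_lt_of_log_integral_exp_pos (hmeas f hfF.1)
      (hmeas fStar hfStarMem) (hbdd f hfF.1) (hbdd fStar hfStarMem) (hη n) (hηV n) hpos⟩
  choose u hu hgap using approx
  obtain ⟨g, hg, φ, hφ, htend⟩ := hcompact u hu
  have hrisk : Tendsto (fun k => ∫ z, ℓ z.2 (u (φ k) z.1) ∂P) atTop
      (𝓝 (∫ z, ℓ z.2 (g z.1) ∂P)) :=
    tendsto_of_forall_lt_imp_abs_sub_lt (R := fun f => ∫ z, ℓ z.2 (f z.1) ∂P) (hcont g hg.1)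
      (.of_forall fun k => (hu (φ k)).1) (by simpa only [abs_sub_comm] using htend)
  refine ⟨g, hg.1, hg.2, le_antisymm ?_ (hfStarMin g hg.1)⟩
  have := le_of_tendsto_of_tendsto' (hrisk.sub_const _)
    (by simpa [Function.comp_def] using (hη0.mul_const (V ^ 2)).comp hφ.tendsto_atTop)
    fun k => (hgap (φ k)).le
  linarith

/-- **Non-unique minimizers.**
Let `(ℓ, F, P)` have losses bounded in `[0, V]` a.s., risk minimizer `f* ∈ F`,
and for `ε > 0` let `G_ε = {f*} ∪ {f ∈ F : ‖f - f*‖_{L₁(P)} ≥ ε}`.  Assume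
`G_ε \ {f*}` is (sequentially) compact in the `L₁(P)` pseudometric and the risk
is `L₁(P)`-continuous on `F`.  If `(ℓ, G_ε, P)` is not `η`-stochastically mixable
for any `η > 0`, then there is `g* ∈ F` with `‖g* - f*‖_{L₁(P)} ≥ ε` and
`P(ℓ∘g*) = P(ℓ∘f*)`: the risk minimizer over `F` is not unique. -/
theorem non_unique_minimizers
    {X Y : Type*} [MeasurableSpace X] [MeasurableSpace Y]
    (P : Measure (X × Y)) [IsProbabilityMeasure P]
    (ℓ : Y → ℝ → ℝ) (F : Set (X → ℝ))
    (hmeas : ∀ f ∈ F, Measurable fun z : X × Y => ℓ z.2 (f z.1))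
    (V : ℝ) (hbdd : ∀ f ∈ F, ∀ᵐ z ∂P, ℓ z.2 (f z.1) ∈ Set.Icc 0 V)
    (fStar : X → ℝ) (hfStarMem : fStar ∈ F)
    (hfStarMin : ∀ f ∈ F, ∫ z, ℓ z.2 (fStar z.1) ∂P ≤ ∫ z, ℓ z.2 (f z.1) ∂P)
    (ε : ℝ) (hε : 0 < ε)
    -- sequential compactness of `G_ε \ {f*}` in the `L₁(P)` pseudometric
    (hcompact : ∀ u : ℕ → (X → ℝ),
      (∀ k, u k ∈ F ∧ ε ≤ ∫ z, |u k z.1 - fStar z.1| ∂P) →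
      ∃ g, (g ∈ F ∧ ε ≤ ∫ z, |g z.1 - fStar z.1| ∂P) ∧
        ∃ φ : ℕ → ℕ, StrictMono φ ∧
          Filter.Tendsto (fun k => ∫ z, |u (φ k) z.1 - g z.1| ∂P)
            Filter.atTop (nhds 0))
    -- continuity of the risk on `F` w.r.t. the `L₁(P)` pseudometric
    (hcont : ∀ f ∈ F, ∀ c > 0, ∃ d > 0, ∀ g ∈ F,
      (∫ z, |f z.1 - g z.1| ∂P) < d →
      |(∫ z, ℓ z.2 (g z.1) ∂P) - ∫ z, ℓ z.2 (f z.1) ∂P| < c)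
    -- `(ℓ, G_ε, P)` is not `η`-stochastically mixable for any `η > 0`
    (hnotmix : ∀ η > 0, ∃ f,
      (f = fStar ∨ (f ∈ F ∧ ε ≤ ∫ z, |f z.1 - fStar z.1| ∂P)) ∧
      0 < Real.log (∫ z, Real.exp (-η * (ℓ z.2 (f z.1) - ℓ z.2 (fStar z.1))) ∂P)) :
    ∃ g ∈ F, ε ≤ (∫ z, |g z.1 - fStar z.1| ∂P) ∧
      (∫ z, ℓ z.2 (g z.1) ∂P) = ∫ z, ℓ z.2 (fStar z.1) ∂P :=
  non_unique_minimizers_general P ℓ F hmeas V hbdd fStar hfStarMem hfStarMin ε hcompact hcont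
    hnotmix
end

section
/- Let Z be a random variable with law P supported on [-V, V] such that E[Z] = m > 0 and lim_{η→∞} E[exp(-η Z)] < 1. Then for every ε > 0 and every η₀ > 0, there exists a probability measure Q on [-V, V] × [-V, V] such that: the first marginal of Q equals P; the second coordinate is at most the first coordinate Q-almost surely; the mean of the second coordinate under Q lies within ε of m; and there exists a finite η ≥ η₀ such that the second coordinate Z' satisfies E_Q[exp(-η Z')] = 1. -/
/-!
Keep `Z` with probability `1 - p` and replace it by `-V` with probability `p`, independently.
This moves the mean by `p (m + V)` and gives
`E[exp (-η Z')] = (1 - p) E[exp (-η Z)] + p exp (η V)`.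
By hyper-concentration some `η₁ ≥ η₀` has `E[exp (-η₁ Z)] < 1`, so for small `p > 0` the right-hand
side is `< 1` at `η₁`; for every `p > 0` it tends to `+∞` as `η → ∞`, and being continuous in `η`
it equals `1` somewhere beyond `η₁`.
-/

open MeasureTheory Real Filter Topology Set ProbabilityTheory

section replaceCoupling

variable {α : Type*} [MeasurableSpace α]

/-- Law of `(Z, Z')`, where `Z ~ P` and, independently of `Z`, `Z' = Z` with probability `1 - p`
and `Z' = c` with probability `p`. -/
noncomputable def replaceCoupling (P : Measure α) (p : ℝ) (c : α) : Measure (α × α) :=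
  ENNReal.ofReal (1 - p) • P.map (fun x => (x, x)) + ENNReal.ofReal p • P.map (fun x => (x, c))

variable {P : Measure α} {p : ℝ} {c : α}

lemma measurable_pair_self : Measurable (fun x : α => (x, x)) :=
  measurable_id.prodMk measurable_id

lemma measurable_pair_const : Measurable (fun x : α => (x, c)) :=
  measurable_id.prodMk measurable_const

lemma replaceCoupling_map_fst (hp0 : 0 ≤ p) (hp1 : p ≤ 1) :
    (replaceCoupling P p c).map Prod.fst = P := by
  rw [replaceCoupling, Measure.map_add _ _ measurable_fst, Measure.map_smul, Measure.map_smul,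
    Measure.map_map measurable_fst measurable_pair_self,
    Measure.map_map measurable_fst measurable_pair_const]
  simp only [Function.comp_def, Measure.map_id']
  rw [← add_smul, ← ENNReal.ofReal_add (by linarith) hp0, sub_add_cancel, ENNReal.ofReal_one,
    one_smul]

lemma isProbabilityMeasure_replaceCoupling [IsProbabilityMeasure P] (hp0 : 0 ≤ p) (hp1 : p ≤ 1) :
    IsProbabilityMeasure (replaceCoupling P p c) := by
  constructor
  rw [← Set.preimage_univ (f := Prod.fst), ← Measure.map_apply measurable_fst .univ,
    replaceCoupling_map_fst hp0 hp1, measure_univ]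

lemma ae_replaceCoupling {R : α × α → Prop} (hR : MeasurableSet {q | R q})
    (hdiag : ∀ᵐ x ∂P, R (x, x)) (hconst : ∀ᵐ x ∂P, R (x, c)) :
    ∀ᵐ q ∂replaceCoupling P p c, R q := by
  rw [replaceCoupling, ae_add_measure_iff]
  exact ⟨Measure.ae_smul_measure ((ae_map_iff measurable_pair_self.aemeasurable hR).mpr hdiag) _,
    Measure.ae_smul_measure ((ae_map_iff measurable_pair_const.aemeasurable hR).mpr hconst) _⟩

lemma integral_comp_snd_replaceCoupling [IsProbabilityMeasure P] (hp0 : 0 ≤ p) (hp1 : p ≤ 1)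
    {φ : α → ℝ} (hφ : Measurable φ) (hφP : Integrable φ P) :
    ∫ q, φ q.2 ∂replaceCoupling P p c = (1 - p) * ∫ x, φ x ∂P + p * φ c := by
  have hφsnd : Measurable fun q : α × α => φ q.2 := hφ.comp measurable_snd
  have hdiag : Integrable (fun q : α × α => φ q.2) (P.map fun x => (x, x)) :=
    (integrable_map_measure hφsnd.aestronglyMeasurable measurable_pair_self.aemeasurable).mpr hφP
  have hconst : Integrable (fun q : α × α => φ q.2) (P.map fun x => (x, c)) :=
    (integrable_map_measure hφsnd.aestronglyMeasurable measurable_pair_const.aemeasurable).mpr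
      (integrable_const (φ c))
  rw [replaceCoupling, integral_add_measure (hdiag.smul_measure ENNReal.ofReal_ne_top)
      (hconst.smul_measure ENNReal.ofReal_ne_top), integral_smul_measure, integral_smul_measure,
    integral_map measurable_pair_self.aemeasurable hφsnd.aestronglyMeasurable,
    integral_map measurable_pair_const.aemeasurable hφsnd.aestronglyMeasurable,
    ENNReal.toReal_ofReal (by linarith), ENNReal.toReal_ofReal hp0]
  simp

end replaceCoupling

lemma Continuous.integrable_of_ae_mem_compact {X E : Type*} [TopologicalSpace X] [T2Space X]
    [MeasurableSpace X] [OpensMeasurableSpace X] [NormedAddCommGroup E] {μ : Measure X}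
    [IsFiniteMeasureOnCompacts μ] {K : Set X} (hK : IsCompact K) (hμK : ∀ᵐ x ∂μ, x ∈ K)
    {f : X → E} (hf : Continuous f) : Integrable f μ := by
  rw [← Measure.restrict_eq_self_of_ae_mem hμK]
  exact hf.continuousOn.integrableOn_compact hK

lemma continuous_integral_exp_neg_mul {μ : Measure ℝ}
    (hμ : ∀ t, Integrable (fun x => exp (t * x)) μ) :
    Continuous fun η => ∫ x, exp (-η * x) ∂μ :=
  (continuous_mgf (X := id) hμ).comp continuous_neg

lemma eventually_exists_mix_eq_one {G : ℝ → ℝ} (hG : Continuous G) {L : ℝ} (hL : L < 1)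
    (hGL : Tendsto G atTop (𝓝 L)) {V : ℝ} (hV : 0 < V) (η₀ : ℝ) :
    ∀ᶠ p in 𝓝[>] 0, ∃ η ≥ η₀, (1 - p) * G η + p * exp (η * V) = 1 := by
  obtain ⟨η₁, hGη₁, hη₁⟩ := ((hGL.eventually_lt_const hL).and (eventually_ge_atTop η₀)).exists
  have hsmall : ∀ᶠ p in 𝓝 0, (1 - p) * G η₁ + p * exp (η₁ * V) < 1 :=
    (by fun_prop : Continuous fun p : ℝ => (1 - p) * G η₁ + p * exp (η₁ * V)).continuousAt
      |>.eventually_lt continuousAt_const (by simpa using hGη₁)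
  filter_upwards [eventually_nhdsWithin_of_eventually_nhds hsmall, self_mem_nhdsWithin]
    with p hp (hp0 : 0 < p)
  have hlarge : Tendsto (fun η => (1 - p) * G η + p * exp (η * V)) atTop atTop :=
    (hGL.const_mul (1 - p)).add_atTop
      ((tendsto_exp_atTop.comp (tendsto_id.atTop_mul_const hV)).const_mul_atTop hp0)
  obtain ⟨M, hM, hηM⟩ := ((hlarge.eventually_ge_atTop 1).and (eventually_ge_atTop η₁)).exists
  obtain ⟨η, hη, hη_eq⟩ := intermediate_value_Icc hηM
    (by fun_prop : Continuous fun η => (1 - p) * G η + p * exp (η * V)).continuousOn ⟨hp.le, hM⟩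
  exact ⟨η, hη₁.trans hη.1, hη_eq⟩

theorem hyper_concentrated_modification_general
    (V : ℝ) (hV : 0 < V)
    (P : Measure ℝ) [IsProbabilityMeasure P]
    (hsupp : P (Set.Icc (-V) V)ᶜ = 0)
    (m : ℝ) (hmean : ∫ x, x ∂P = m)
    (hhyper : ∃ L < (1 : ℝ), Filter.Tendsto
      (fun η : ℝ => ∫ x, Real.exp (-η * x) ∂P) Filter.atTop (nhds L))
    (ε : ℝ) (hε : 0 < ε) (η₀ : ℝ) :
    ∃ Q : Measure (ℝ × ℝ), IsProbabilityMeasure Q ∧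
      Q ((Set.Icc (-V) V ×ˢ Set.Icc (-V) V) : Set (ℝ × ℝ))ᶜ = 0 ∧
      Q.map Prod.fst = P ∧
      (∀ᵐ p ∂Q, p.2 ≤ p.1) ∧
      |(∫ p, p.2 ∂Q) - m| ≤ ε ∧
      ∃ η ≥ η₀, (∫ p, Real.exp (-η * p.2) ∂Q) = 1 := by
  have hP : ∀ᵐ x ∂P, x ∈ Icc (-V) V := mem_ae_iff.mpr hsupp
  have hintegrable {f : ℝ → ℝ} (hf : Continuous f) : Integrable f P :=
    hf.integrable_of_ae_mem_compact isCompact_Icc hP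
  obtain ⟨L, hL, hGL⟩ := hhyper
  have hmean_close : ∀ᶠ p in 𝓝 (0 : ℝ), |(1 - p) * m + p * -V - m| < ε :=
    (by fun_prop : Continuous fun p : ℝ => |(1 - p) * m + p * -V - m|).continuousAt.eventually_lt
      continuousAt_const (by simpa using hε)
  have hG : Continuous fun η => ∫ x, exp (-η * x) ∂P :=
    continuous_integral_exp_neg_mul fun _ => hintegrable (by fun_prop)
  obtain ⟨p, ⟨η, hη₀η, hη⟩, hpε, hp0, hp1⟩ :=
    ((eventually_exists_mix_eq_one hG hL hGL hV η₀).and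
      ((eventually_nhdsWithin_of_eventually_nhds hmean_close).and (Ioo_mem_nhdsGT one_pos))).exists
  refine ⟨replaceCoupling P p (-V), isProbabilityMeasure_replaceCoupling hp0.le hp1.le, ?_,
    replaceCoupling_map_fst hp0.le hp1.le, ?_, ?_, η, hη₀η, ?_⟩
  · exact mem_ae_iff.mp (ae_replaceCoupling (measurableSet_Icc.prod measurableSet_Icc)
      (hP.mono fun x hx => ⟨hx, hx⟩) (hP.mono fun x hx => ⟨hx, le_rfl, by linarith⟩))
  · exact ae_replaceCoupling (measurableSet_le measurable_snd measurable_fst)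
      (ae_of_all _ fun _ => le_rfl) (hP.mono fun x hx => hx.1)
  · rw [integral_comp_snd_replaceCoupling (φ := fun x => x) hp0.le hp1.le measurable_id
      (hintegrable continuous_id)]
    simpa [hmean] using hpε.le
  · rw [integral_comp_snd_replaceCoupling (φ := fun x => exp (-η * x)) hp0.le hp1.le
      (by fun_prop) (hintegrable (by fun_prop))]
    simpa using hη

/-- **Hyper-concentrated excess losses can be modified.**
Let `P` be the law of a random variable `Z` supported on `[-V, V]` with mean
`m > 0` and `lim_{η→∞} E[exp(-η Z)] < 1`.  Then for every `ε > 0` and `η₀ > 0`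
there is a coupling `Q` on `[-V,V]²` whose first marginal is `P`, whose second
coordinate `Z'` satisfies `Z' ≤ Z` a.s., whose mean is within `ε` of `m`, and
such that `E_Q[exp(-η Z')] = 1` for some finite `η ≥ η₀`. -/
theorem hyper_concentrated_modification
    (V : ℝ) (hV : 0 < V)
    (P : Measure ℝ) [IsProbabilityMeasure P]
    (hsupp : P (Set.Icc (-V) V)ᶜ = 0)
    (m : ℝ) (hm : 0 < m) (hmean : ∫ x, x ∂P = m)
    (hhyper : ∃ L < (1 : ℝ), Filter.Tendsto
      (fun η : ℝ => ∫ x, Real.exp (-η * x) ∂P) Filter.atTop (nhds L))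
    (ε : ℝ) (hε : 0 < ε) (η₀ : ℝ) (hη₀ : 0 < η₀) :
    ∃ Q : Measure (ℝ × ℝ), IsProbabilityMeasure Q ∧
      Q ((Set.Icc (-V) V ×ˢ Set.Icc (-V) V) : Set (ℝ × ℝ))ᶜ = 0 ∧
      Q.map Prod.fst = P ∧
      (∀ᵐ p ∂Q, p.2 ≤ p.1) ∧
      |(∫ p, p.2 ∂Q) - m| ≤ ε ∧
      ∃ η ≥ η₀, (∫ p, Real.exp (-η * p.2) ∂Q) = 1 :=
  hyper_concentrated_modification_general V hV P hsupp m hmean hhyper ε hε η₀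
end

section
/- Let Z be a bounded real-valued random variable with E[Z] > 0, and suppose there exists η > 0 with E[exp(-η Z)] > 1. Then there exists η' ∈ (0, η) such that E[exp(-η' Z)] = 1. -/
/-!
Write `M(t) = E[exp(t Z)]` for the moment generating function of `Z`. Boundedness of `Z` makes
`M` finite and smooth on all of `ℝ`, with `M(0) = 1` and `M'(0) = E[Z] > 0`, so `M < 1` just to
the left of `0`. Since `M(-η) > 1`, the intermediate value theorem gives a zero of `M - 1` in
`(-η, 0)`.
-/

open MeasureTheory ProbabilityTheory Set Topology

lemma HasDerivAt.eventually_nhdsLT_lt {f : ℝ → ℝ} {f' x : ℝ} (hf : HasDerivAt f f' x)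
    (hf' : 0 < f') : ∀ᶠ y in 𝓝[<] x, f y < f x := by
  have hslope := (hasDerivAt_iff_tendsto_slope_left_right.mp hf).1
  filter_upwards [hslope.eventually_const_lt hf', self_mem_nhdsWithin] with y hy hyx
  rw [slope_comm] at hy
  exact (slope_pos_iff_of_le (le_of_lt hyx)).mp hy

lemma exists_mem_Ioo_eq_of_hasDerivAt_pos {f : ℝ → ℝ} {f' a b : ℝ} (hab : a < b)
    (hf : ContinuousOn f (Icc a b)) (hderiv : HasDerivAt f f' b) (hf' : 0 < f')
    (hfab : f b < f a) : ∃ c ∈ Ioo a b, f c = f b := by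
  obtain ⟨d, hfd, hd⟩ := ((hderiv.eventually_nhdsLT_lt hf').and (Ioo_mem_nhdsLT hab)).exists
  obtain ⟨c, hc, hfc⟩ := intermediate_value_Ioo' hd.1.le (hf.mono (Icc_subset_Icc_right hd.2.le))
    ⟨hfd, hfab⟩
  exact ⟨c, ⟨hc.1, hc.2.trans hd.2⟩, hfc⟩

namespace ProbabilityTheory

variable {Ω : Type*} [MeasurableSpace Ω] {μ : Measure Ω} {X : Ω → ℝ}

lemma integrable_exp_mul_of_abs_le_const [IsFiniteMeasure μ] (hX : AEMeasurable X μ) {C : ℝ}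
    (hC : ∀ᵐ ω ∂μ, |X ω| ≤ C) (t : ℝ) : Integrable (fun ω ↦ Real.exp (t * X ω)) μ :=
  integrable_exp_mul_of_mem_Icc hX (hC.mono fun _ ↦ abs_le.mp)

lemma hasDerivAt_mgf_zero (h : 0 ∈ interior (integrableExpSet X μ)) :
    HasDerivAt (mgf X μ) μ[X] 0 := by
  simpa using hasDerivAt_mgf h

end ProbabilityTheory

theorem cgf_intermediate_value_general
    {Ω : Type*} [MeasurableSpace Ω] (μ : Measure Ω) [IsProbabilityMeasure μ]
    (Z : Ω → ℝ) (hZbdd : ∃ C : ℝ, ∀ᵐ ω ∂μ, |Z ω| ≤ C)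
    (hmean : 0 < ∫ ω, Z ω ∂μ)
    (η : ℝ) (hη : 0 < η)
    (hgt : 1 < ∫ ω, Real.exp (-η * Z ω) ∂μ) :
    ∃ η' ∈ Set.Ioo 0 η, (∫ ω, Real.exp (-η' * Z ω) ∂μ) = 1 := by
  obtain ⟨C, hC⟩ := hZbdd
  -- A nonzero Bochner integral forces integrability, so `Z` is a.e. measurable.
  have hZ : AEMeasurable Z μ := (Integrable.of_integral_ne_zero hmean.ne').aemeasurable
  have hint := integrable_exp_mul_of_abs_le_const hZ hC
  have hderiv : HasDerivAt (mgf Z μ) μ[Z] 0 :=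
    hasDerivAt_mgf_zero (by simp [integrableExpSet, hint])
  obtain ⟨s, hs, hs1⟩ := exists_mem_Ioo_eq_of_hasDerivAt_pos (neg_lt_zero.mpr hη)
    (continuous_mgf hint).continuousOn hderiv hmean (by rwa [mgf_zero])
  refine ⟨-s, ⟨neg_pos.mpr hs.2, neg_lt.mp hs.1⟩, ?_⟩
  simpa [mgf] using hs1

/-- **Intermediate value for the cumulant generating function.**
If `Z` is a bounded random variable with `E[Z] > 0` and `E[exp(-η Z)] > 1` for
some `η > 0`, then there exists `η' ∈ (0, η)` with `E[exp(-η' Z)] = 1`. -/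
theorem cgf_intermediate_value
    {Ω : Type*} [MeasurableSpace Ω] (μ : Measure Ω) [IsProbabilityMeasure μ]
    (Z : Ω → ℝ) (hZmeas : Measurable Z) (hZbdd : ∃ C : ℝ, ∀ᵐ ω ∂μ, |Z ω| ≤ C)
    (hmean : 0 < ∫ ω, Z ω ∂μ)
    (η : ℝ) (hη : 0 < η)
    (hgt : 1 < ∫ ω, Real.exp (-η * Z ω) ∂μ) :
    ∃ η' ∈ Set.Ioo 0 η, (∫ ω, Real.exp (-η' * Z ω) ∂μ) = 1 :=
  cgf_intermediate_value_general μ Z hZbdd hmean η hη hgt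
end
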